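/- arXiv:2407.17660 — 5 statements merged into one kernel-verified Lean document; each statement's English description precedes it below -/
import Mathlib

section
/- Let π_1,…,π_k be pairwise disjoint subsets of [n] that are mutually noncrossing (i.e. together they form blocks of some noncrossing partition of [n], completed by singletons to the minimal such partition π_min). Let μ_0 be the set of elements of [n] not belonging to any π_i and not nested inside any π_i, and for each i and each j = 1,…,|π_i|−1 let μ_i^j be the set of elements of [n] lying strictly between the j-th and (j+1)-th elements of π_i, not belonging to any π_l and not nested inside any block π_l nested inside π_i. Then the set NCP_π(n) of noncrossing partitions μ ∈ NCP(n) having each π_i as a block is a sublattice of (NCP(n), |), and it is isomorphic as a lattice to the cartesian product of the lattices NCP(μ_0) and NCP(μ_i^j) for i = 1,…,k and j = 1,…,|π_i|−1. -/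
open scoped BigOperators

/-- A partition (setoid) of `Fin N` is noncrossing if there are no
`a < b < c < d` with `a ~ c`, `b ~ d` but `a ≁ b`. -/
def IsNoncrossing {N : ℕ} (π : Setoid (Fin N)) : Prop :=
  ∀ a b c d : Fin N, a < b → b < c → c < d → π a c → π b d → π a b

/-- The set of noncrossing partitions of `[N] = {1,…,N}`, modelled as
noncrossing setoids on `Fin N`. -/
abbrev NCP (N : ℕ) : Type := {π : Setoid (Fin N) // IsNoncrossing π}

theorem bot_isNoncrossing (N : ℕ) : IsNoncrossing (⊥ : Setoid (Fin N)) := by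
  intro a b c d hab hbc hcd hac _
  have h : a = c := by
    have := Setoid.bot_def (α := Fin N)
    exact by rw [show ((⊥ : Setoid (Fin N)) : Fin N → Fin N → Prop) = (· = ·) from this] at hac; exact hac
  exact absurd (h ▸ (hab.trans hbc)) (lt_irrefl a)

theorem top_isNoncrossing (N : ℕ) : IsNoncrossing (⊤ : Setoid (Fin N)) := by
  intro a b c d _ _ _ _ _
  show (⊤ : Setoid (Fin N)) a b
  rw [show ((⊤ : Setoid (Fin N)) : Fin N → Fin N → Prop) = ⊤ from Setoid.top_def]
  trivial

theorem inf_isNoncrossing {N : ℕ} {π μ : Setoid (Fin N)}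
    (hπ : IsNoncrossing π) (hμ : IsNoncrossing μ) : IsNoncrossing (π ⊓ μ) := by
  intro a b c d hab hbc hcd hac hbd
  have hac' : π a c ∧ μ a c := by
    rw [show ((π ⊓ μ : Setoid (Fin N)) : Fin N → Fin N → Prop) = ⇑π ⊓ ⇑μ from Setoid.inf_def] at hac
    exact hac
  have hbd' : π b d ∧ μ b d := by
    rw [show ((π ⊓ μ : Setoid (Fin N)) : Fin N → Fin N → Prop) = ⇑π ⊓ ⇑μ from Setoid.inf_def] at hbd
    exact hbd
  show (π ⊓ μ) a b
  rw [show ((π ⊓ μ : Setoid (Fin N)) : Fin N → Fin N → Prop) = ⇑π ⊓ ⇑μ from Setoid.inf_def]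
  exact ⟨hπ a b c d hab hbc hcd hac'.1 hbd'.1, hμ a b c d hab hbc hcd hac'.2 hbd'.2⟩

/-- The join of two partitions in the lattice of noncrossing partitions:
the finest noncrossing partition coarser than both. -/
def ncSup {N : ℕ} (π μ : Setoid (Fin N)) : Setoid (Fin N) :=
  sInf {γ : Setoid (Fin N) | IsNoncrossing γ ∧ π ≤ γ ∧ μ ≤ γ}

theorem ncSup_isNoncrossing {N : ℕ} (π μ : Setoid (Fin N)) : IsNoncrossing (ncSup π μ) := by
  intro a b c d hab hbc hcd hac hbd
  unfold ncSup at hac hbd ⊢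
  rw [Setoid.sInf_iff] at hac hbd ⊢
  intro γ hγ
  exact hγ.1 a b c d hab hbc hcd (hac γ hγ) (hbd γ hγ)

noncomputable instance NCP.instLattice (N : ℕ) : Lattice (NCP N) :=
  { (inferInstance : PartialOrder (NCP N)) with
    sup := fun α β => ⟨ncSup α.1 β.1, ncSup_isNoncrossing _ _⟩
    inf := fun α β => ⟨α.1 ⊓ β.1, inf_isNoncrossing α.2 β.2⟩
    le_sup_left := fun α β => by
      show α.1 ≤ ncSup α.1 β.1
      exact le_sInf fun γ hγ => hγ.2.1
    le_sup_right := fun α β => by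
      show β.1 ≤ ncSup α.1 β.1
      exact le_sInf fun γ hγ => hγ.2.2
    sup_le := fun α β γ h1 h2 => by
      show ncSup α.1 β.1 ≤ γ.1
      exact sInf_le ⟨γ.2, h1, h2⟩
    inf_le_left := fun α β => by
      show α.1 ⊓ β.1 ≤ α.1
      exact inf_le_left
    inf_le_right := fun α β => by
      show α.1 ⊓ β.1 ≤ β.1
      exact inf_le_right
    le_inf := fun α β γ h1 h2 => by
      show α.1 ≤ β.1 ⊓ γ.1
      exact le_inf h1 h2 }

instance NCP.instOrderBot (N : ℕ) : OrderBot (NCP N) where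
  bot := ⟨⊥, bot_isNoncrossing N⟩
  bot_le := fun α => by
    show (⊥ : Setoid (Fin N)) ≤ α.1
    exact bot_le

instance NCP.instOrderTop (N : ℕ) : OrderTop (NCP N) where
  top := ⟨⊤, top_isNoncrossing N⟩
  le_top := fun α => by
    show α.1 ≤ (⊤ : Setoid (Fin N))
    exact le_top

/-- The disjoint sum of two setoids: elements are related iff they lie on
the same side and are related there. -/
def sumSetoid {A B : Type*} (α : Setoid A) (β : Setoid B) : Setoid (A ⊕ B) where
  r x y := match x, y with
    | Sum.inl a, Sum.inl a' => α a a'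
    | Sum.inr b, Sum.inr b' => β b b'
    | _, _ => False
  iseqv := by
    constructor
    · intro x
      cases x with
      | inl a => exact α.refl' a
      | inr b => exact β.refl' b
    · intro x y h
      cases x <;> cases y <;>
        first
          | exact α.symm' h
          | exact β.symm' h
          | exact h.elim
    · intro x y z h1 h2
      cases x <;> cases y <;> cases z <;>
        first
          | exact α.trans' h1 h2
          | exact β.trans' h1 h2
          | exact h1.elim
          | exact h2.elim

/-- Decoding map for the `n`-perfect shuffle of a partition of `[n]`
(placed on odd positions) and a partition of `[n]` (placed on even positions). -/
def decode2 (n : ℕ) (x : Fin (2*n)) : Fin n ⊕ Fin n :=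
  if (x : ℕ) % 2 = 0 then Sum.inl ⟨(x:ℕ)/2, by have := x.isLt; omega⟩
  else Sum.inr ⟨(x:ℕ)/2, by have := x.isLt; omega⟩

/-- The `n`-perfect shuffle `α ∗_n β` of two partitions of `[n]`, a partition
of `[2n]`. -/
def shuffle2 {n : ℕ} (α β : Setoid (Fin n)) : Setoid (Fin (2*n)) :=
  Setoid.comap (decode2 n) (sumSetoid α β)

/-- The pair `(α, β)` is `n`-admissible if the `n`-perfect shuffle `α ∗_n β`
is noncrossing. -/
def Admissible2 {n : ℕ} (α β : NCP n) : Prop := IsNoncrossing (shuffle2 α.1 β.1)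

/-- The `p`-th power of a partition of `[n]`: each element is replicated `p`
times, all replicas being put in the same block. -/
def powSetoid (p : ℕ) {n : ℕ} (π : Setoid (Fin n)) : Setoid (Fin (p*n)) :=
  Setoid.comap (fun x : Fin (p*n) =>
    (⟨(x:ℕ)/p, by
        have hx := x.isLt
        rcases Nat.eq_zero_or_pos p with h|h
        · subst h; exact absurd hx (by omega)
        · exact Nat.div_lt_of_lt_mul hx⟩ : Fin n)) π

theorem isNoncrossing_comap_of_monotone {M N : ℕ} (f : Fin M → Fin N) (hf : Monotone f)
    {π : Setoid (Fin N)} (hπ : IsNoncrossing π) : IsNoncrossing (Setoid.comap f π) := by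
  intro a b c d hab hbc hcd hac hbd
  have h1 : f a ≤ f b := hf hab.le
  have h2 : f b ≤ f c := hf hbc.le
  have h3 : f c ≤ f d := hf hcd.le
  show π (f a) (f b)
  have hac' : π (f a) (f c) := hac
  have hbd' : π (f b) (f d) := hbd
  rcases eq_or_lt_of_le h1 with e1 | l1
  · rw [← e1]
  · rcases eq_or_lt_of_le h2 with e2 | l2
    · rw [e2]; exact hac'
    · rcases eq_or_lt_of_le h3 with e3 | l3
      · rw [← e3] at hbd'
        exact π.trans' hac' (π.symm' hbd')
      · exact hπ (f a) (f b) (f c) (f d) l1 l2 l3 hac' hbd'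

theorem powSetoid_isNoncrossing (p : ℕ) {n : ℕ} (π : NCP n) :
    IsNoncrossing (powSetoid p π.1) :=
  isNoncrossing_comap_of_monotone _ (fun x y h => by
    simp only [Fin.mk_le_mk]
    exact Nat.div_le_div_right h) π.2

/-- The `p`-th power map `NCP n → NCP (p·n)`. -/
def npow (p : ℕ) {n : ℕ} (π : NCP n) : NCP (p*n) := ⟨powSetoid p π.1, powSetoid_isNoncrossing p π⟩

open Classical in
/-- The `p`-th root `π^{1/p}` of a partition of `[pn]`: the unique preimage
under the `p`-th power map when it exists (junk value `⊥` otherwise). -/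
noncomputable def nroot (p n : ℕ) (π : Setoid (Fin (p*n))) : NCP n :=
  if h : ∃ σ : NCP n, (npow p σ).1 = π then h.choose else ⊥

/-- The interval partition `{{1,…,p},{p+1,…,2p},…,{pn−p+1,…,pn}}` of `[pn]`. -/
def intervalSetoid (p n : ℕ) : Setoid (Fin (p*n)) :=
  Setoid.ker (fun x : Fin (p*n) => (x:ℕ)/p)

theorem intervalSetoid_isNoncrossing (p n : ℕ) : IsNoncrossing (intervalSetoid p n) := by
  intro a b c d hab hbc hcd hac _
  have h1 : (a:ℕ)/p = (c:ℕ)/p := hac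
  have h2 : (a:ℕ)/p ≤ (b:ℕ)/p := Nat.div_le_div_right (le_of_lt hab)
  have h3 : (b:ℕ)/p ≤ (c:ℕ)/p := Nat.div_le_div_right (le_of_lt hbc)
  show (a:ℕ)/p = (b:ℕ)/p
  exact le_antisymm h2 (by rw [h1]; exact h3)

/-- The interval partition as a noncrossing partition. -/
def intervalNCP (p n : ℕ) : NCP (p*n) := ⟨intervalSetoid p n, intervalSetoid_isNoncrossing p n⟩

/-- The composition product `α ∘ β := ((α ⧢_n β) ∨ {{1,2},…,{2n−1,2n}})^{1/2}`,
defined (meaningfully) on `n`-admissible pairs. -/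
noncomputable def comp {n : ℕ} (α β : NCP n) : NCP n :=
  nroot 2 n (ncSup (shuffle2 α.1 β.1) (intervalSetoid 2 n))

open Classical in
/-- The Kreweras complement: the unique `γ` with `(α, γ)` admissible and
`α ∘ γ = 1_n`. -/
noncomputable def kreweras {n : ℕ} (α : NCP n) : NCP n :=
  if h : ∃ γ : NCP n, Admissible2 α γ ∧ comp α γ = ⊤ then h.choose else ⊥

open Classical in
/-- The relative Kreweras complement `K_β(α)`: the unique `γ` with `(α, γ)`
admissible and `α ∘ γ = β`. -/
noncomputable def relKreweras {n : ℕ} (β α : NCP n) : NCP n :=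
  if h : ∃ γ : NCP n, Admissible2 α γ ∧ comp α γ = β then h.choose else ⊥

/-- Iterated (left-associated) composition product `α_1 ∘ ⋯ ∘ α_k`. -/
noncomputable def compTuple {n : ℕ} : {k : ℕ} → (Fin k → NCP n) → NCP n
  | 0, _ => ⊥
  | k+1, α => comp (compTuple (fun i : Fin k => α i.castSucc)) (α (Fin.last k))

/-- The `k`-fold `n`-perfect shuffle `α_1 ∗_n ⋯ ∗_n α_k` of `k` partitions of `[n]`,
a partition of `[kn]`. -/
def eqShuffle (n k : ℕ) (α : Fin k → Setoid (Fin n)) : Setoid (Fin (k*n)) where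
  r x y := ∃ i : Fin k, ((x:ℕ) % k = (i:ℕ)) ∧ ((y:ℕ) % k = (i:ℕ)) ∧
      (α i) ⟨(x:ℕ)/k, Nat.div_lt_of_lt_mul x.isLt⟩ ⟨(y:ℕ)/k, Nat.div_lt_of_lt_mul y.isLt⟩
  iseqv := by
    constructor
    · intro x
      have h0 : 0 < k * n := lt_of_le_of_lt (Nat.zero_le _) x.isLt
      have hk : 0 < k := by
        rcases Nat.eq_zero_or_pos k with h|h
        · subst h; rw [Nat.zero_mul] at h0; exact absurd h0 (lt_irrefl 0)
        · exact h
      exact ⟨⟨(x:ℕ) % k, Nat.mod_lt _ hk⟩, rfl, rfl, (α _).refl' _⟩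
    · rintro x y ⟨i, h1, h2, h3⟩
      exact ⟨i, h2, h1, (α i).symm' h3⟩
    · rintro x y z ⟨i, h1, h2, h3⟩ ⟨j, h4, h5, h6⟩
      obtain rfl : i = j := Fin.ext (by rw [← h2, h4])
      exact ⟨i, h1, h5, (α i).trans' h3 h6⟩

/-- A `k`-tuple of noncrossing partitions of `[n]` is `n`-admissible if its
`k`-fold perfect shuffle is noncrossing. -/
def AdmissibleTuple (n k : ℕ) (α : Fin k → NCP n) : Prop :=
  IsNoncrossing (eqShuffle n k fun i => (α i).1)

/-- The minimal partition `π_min` of `[n]` having the pairwise disjoint sets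
`π_1, …, π_k` among its blocks: its blocks are the `π_i` together with
singletons. -/
def minSetoid {n kk : ℕ} (π : Fin kk → Finset (Fin n))
    (hdisj : ∀ i j, i ≠ j → Disjoint (π i) (π j)) : Setoid (Fin n) where
  r x y := x = y ∨ ∃ i, x ∈ π i ∧ y ∈ π i
  iseqv := by
    constructor
    · intro x; left; rfl
    · rintro x y (rfl | ⟨i, hx, hy⟩)
      · left; rfl
      · right; exact ⟨i, hy, hx⟩
    · rintro x y z (rfl | ⟨i, hx, hy⟩) h2
      · exact h2
      · rcases h2 with rfl | ⟨j, hy', hz⟩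
        · right; exact ⟨i, hx, hy⟩
        · right
          refine ⟨i, hx, ?_⟩
          obtain rfl : i = j := by
            by_contra hij
            exact absurd hy' (Finset.disjoint_left.mp (hdisj i j hij) hy)
          exact hz
/-- `B` is a block of the partition `μ`: it is an equivalence class of `μ`. -/
def IsBlock {N : ℕ} (μ : Setoid (Fin N)) (B : Finset (Fin N)) : Prop :=
  ∃ x, ∀ y, y ∈ B ↔ μ x y

/-- The element `x` (i.e. the singleton `{x}`) is nested inside the block `B`:
some element of `B` lies strictly below `x` and some strictly above. -/
def ElemNested {N : ℕ} (x : Fin N) (B : Finset (Fin N)) : Prop :=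
  (∃ u ∈ B, u < x) ∧ (∃ v ∈ B, x < v)

/-- The block `B` is nested inside the block `B'` (i.e. `B ≺ B'`:
`inf B' < inf B ≤ sup B < sup B'`). -/
def BlockNested {N : ℕ} (B B' : Finset (Fin N)) : Prop :=
  (∃ u ∈ B', ∀ w ∈ B, u < w) ∧ (∃ v ∈ B', ∀ w ∈ B, w < v)

open Classical in
/-- `μ_0`: the elements of `[n]` neither belonging to nor nested inside any of
the blocks `π_i`. -/
noncomputable def mu0 {n kk : ℕ} (π : Fin kk → Finset (Fin n)) : Finset (Fin n) :=
  Finset.univ.filter (fun x => (∀ i, x ∉ π i) ∧ ∀ i, ¬ ElemNested x (π i))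

open Classical in
/-- `μ_i^j`: the elements of `[n]` lying strictly between the `j`-th and
`(j+1)`-th elements of `π_i`, belonging to no `π_l`, and not nested inside
any block `π_l` nested inside `π_i`. -/
noncomputable def muGap {n kk : ℕ} (π : Fin kk → Finset (Fin n)) (i : Fin kk)
    (j : Fin ((π i).card - 1)) : Finset (Fin n) :=
  Finset.univ.filter (fun x =>
    (((π i).orderIsoOfFin rfl ⟨(j:ℕ), by have := j.isLt; omega⟩ : {a // a ∈ π i}) : Fin n) < x ∧
    x < (((π i).orderIsoOfFin rfl ⟨(j:ℕ)+1, by have := j.isLt; omega⟩ : {a // a ∈ π i}) : Fin n) ∧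
    (∀ l, x ∉ π l) ∧
    ∀ l, BlockNested (π l) (π i) → ¬ ElemNested x (π l))

section Aux

variable {n kk : ℕ} (π : Fin kk → Finset (Fin n))

/-- the `m`-th element of `π i` -/
noncomputable def el (i : Fin kk) (m : ℕ) (hm : m < (π i).card) : Fin n :=
  (((π i).orderIsoOfFin rfl ⟨m, hm⟩ : {a // a ∈ π i}) : Fin n)

lemma el_mem (i : Fin kk) (m : ℕ) (hm : m < (π i).card) : el π i m hm ∈ π i :=
  ((π i).orderIsoOfFin rfl ⟨m, hm⟩).2

lemma el_lt_el_iff (i : Fin kk) {m m' : ℕ} (hm : m < (π i).card) (hm' : m' < (π i).card) :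
    el π i m hm < el π i m' hm' ↔ m < m' := by
  rw [el, el, Subtype.coe_lt_coe, OrderIso.lt_iff_lt, Fin.mk_lt_mk]

lemma el_lt_el (i : Fin kk) {m m' : ℕ} (hm : m < (π i).card) (hm' : m' < (π i).card)
    (h : m < m') : el π i m hm < el π i m' hm' := (el_lt_el_iff π i hm hm').mpr h

/-- no element of `π l` lies strictly between consecutive elements of `π l` -/
lemma no_el_between {l : Fin kk} {m : ℕ} (hm : m < (π l).card) (hm1 : m + 1 < (π l).card)
    {z : Fin n} (hz : z ∈ π l) (h1 : el π l m hm < z) (h2 : z < el π l (m+1) hm1) : False := by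
  set w := ((π l).orderIsoOfFin rfl).symm ⟨z, hz⟩ with hw
  have hzw : z = el π l (w : ℕ) w.isLt := by
    have h5 : (π l).orderIsoOfFin rfl w = ⟨z, hz⟩ := by
      rw [hw]; exact ((π l).orderIsoOfFin rfl).apply_symm_apply _
    simp only [el]
    rw [show (⟨(w:ℕ), w.isLt⟩ : Fin (π l).card) = w from rfl, h5]
  rw [hzw] at h1 h2
  rw [el_lt_el_iff] at h1 h2
  omega

lemma elg_lt (i : Fin kk) (j : Fin ((π i).card - 1)) :
    (j : ℕ) < (π i).card := by have := j.isLt; omega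

lemma elg1_lt (i : Fin kk) (j : Fin ((π i).card - 1)) :
    (j : ℕ) + 1 < (π i).card := by have := j.isLt; omega

/-- the left endpoint of the gap `(i,j)` -/
noncomputable def elg (i : Fin kk) (j : Fin ((π i).card - 1)) : Fin n :=
  el π i (j : ℕ) (elg_lt π i j)

/-- the right endpoint of the gap `(i,j)` -/
noncomputable def elg1 (i : Fin kk) (j : Fin ((π i).card - 1)) : Fin n :=
  el π i ((j : ℕ) + 1) (elg1_lt π i j)

lemma elg_mem (i : Fin kk) (j : Fin ((π i).card - 1)) : elg π i j ∈ π i := el_mem π i _ _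
lemma elg1_mem (i : Fin kk) (j : Fin ((π i).card - 1)) : elg1 π i j ∈ π i := el_mem π i _ _

lemma elg_lt_elg1 (i : Fin kk) (j : Fin ((π i).card - 1)) : elg π i j < elg1 π i j :=
  el_lt_el π i _ _ (Nat.lt_succ_self _)

lemma mem_muGap_iff {i : Fin kk} {j : Fin ((π i).card - 1)} {x : Fin n} :
    x ∈ muGap π i j ↔ elg π i j < x ∧ x < elg1 π i j ∧ (∀ l, x ∉ π l) ∧
      ∀ l, BlockNested (π l) (π i) → ¬ ElemNested x (π l) := by
  simp only [muGap, Finset.mem_filter, Finset.mem_univ, true_and, elg, elg1, el]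

lemma mem_mu0_iff {x : Fin n} :
    x ∈ mu0 π ↔ (∀ i, x ∉ π i) ∧ ∀ i, ¬ ElemNested x (π i) := by
  simp only [mu0, Finset.mem_filter, Finset.mem_univ, true_and]

/-- gap `(l,j)` has no element of `π l` strictly inside -/
lemma no_el_in_gap {l : Fin kk} {j : Fin ((π l).card - 1)} {z : Fin n} (hz : z ∈ π l)
    (h1 : elg π l j < z) (h2 : z < elg1 π l j) : False :=
  no_el_between π (elg_lt π l j) (elg1_lt π l j) hz h1 h2

variable {hdisj : ∀ i j, i ≠ j → Disjoint (π i) (π j)}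

include hdisj in
lemma blk_eq {x : Fin n} {i t : Fin kk} (hi : x ∈ π i) (ht : x ∈ π t) : i = t := by
  by_contra hne
  exact absurd ht (Finset.disjoint_left.mp (hdisj i t hne) hi)

variable {hnc : IsNoncrossing (minSetoid π hdisj)}

include hdisj hnc in
lemma hncE {a b c d : Fin n} {i t : Fin kk} (hab : a < b) (hbc : b < c) (hcd : c < d)
    (ha : a ∈ π i) (hc : c ∈ π i) (hb : b ∈ π t) (hd : d ∈ π t) : i = t := by
  have hac : (minSetoid π hdisj) a c := Or.inr ⟨i, ha, hc⟩
  have hbd : (minSetoid π hdisj) b d := Or.inr ⟨t, hb, hd⟩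
  have h : (minSetoid π hdisj) a b := hnc a b c d hab hbc hcd hac hbd
  rcases h with h | ⟨s, has, hbs⟩
  · exact absurd h (ne_of_lt hab)
  · exact (blk_eq π (hdisj := hdisj) ha has).trans (blk_eq π (hdisj := hdisj) hbs hb)

end Aux
section Aux2

variable {n kk : ℕ} (π : Fin kk → Finset (Fin n))
variable {hdisj : ∀ i j, i ≠ j → Disjoint (π i) (π j)}
variable {hnc : IsNoncrossing (minSetoid π hdisj)}

include hdisj hnc in
/-- if one element of `π l` lies strictly inside the gap `(l',j')`, then all of `π l` does,
and `l ≠ l'`. -/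
lemma ingap {l l' : Fin kk} {j' : Fin ((π l').card - 1)} {z : Fin n} (hz : z ∈ π l)
    (h2 : elg π l' j' < z) (h3 : z < elg1 π l' j') :
    l ≠ l' ∧ ∀ w ∈ π l, elg π l' j' < w ∧ w < elg1 π l' j' := by
  have hll : l ≠ l' := fun h => (no_el_in_gap π (h ▸ hz) h2 h3)
  refine ⟨hll, fun w hw => ?_⟩
  have hleft : elg π l' j' < w := by
    rcases lt_trichotomy w (elg π l' j') with h|h|h
    · exact absurd (hncE π (hdisj := hdisj) (hnc := hnc) h h2 h3 hw hz
        (elg_mem π l' j') (elg1_mem π l' j')) hll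
    · exact absurd (blk_eq π (hdisj := hdisj) (h ▸ hw) (elg_mem π l' j')) hll
    · exact h
  refine ⟨hleft, ?_⟩
  rcases lt_trichotomy w (elg1 π l' j') with h|h|h
  · exact h
  · exact absurd (blk_eq π (hdisj := hdisj) (h ▸ hw) (elg1_mem π l' j')) hll
  · exact absurd (hncE π (hdisj := hdisj) (hnc := hnc) h2 h3 h
      (elg_mem π l' j') (elg1_mem π l' j') hz hw) (Ne.symm hll)

include hdisj hnc in
lemma ingap_nested {l l' : Fin kk} {j' : Fin ((π l').card - 1)} {z : Fin n} (hz : z ∈ π l)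
    (h2 : elg π l' j' < z) (h3 : z < elg1 π l' j') : BlockNested (π l) (π l') := by
  obtain ⟨-, hall⟩ := ingap π (hdisj := hdisj) (hnc := hnc) hz h2 h3
  exact ⟨⟨elg π l' j', elg_mem π l' j', fun w hw => (hall w hw).1⟩,
    ⟨elg1 π l' j', elg1_mem π l' j', fun w hw => (hall w hw).2⟩⟩

end Aux2

/-- The index type of the regions: `none` is `μ₀`, `some ⟨i,j⟩` is the gap `μ_i^j`. -/
abbrev Region (n kk : ℕ) (π : Fin kk → Finset (Fin n)) : Type :=
  Option ((i : Fin kk) × Fin ((π i).card - 1))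

/-- The region associated to an index. -/
noncomputable def Rset {n kk : ℕ} (π : Fin kk → Finset (Fin n)) : Region n kk π → Finset (Fin n)
  | none => mu0 π
  | some p => muGap π p.1 p.2

section Aux3

variable {n kk : ℕ} (π : Fin kk → Finset (Fin n))
variable {hdisj : ∀ i j, i ≠ j → Disjoint (π i) (π j)}
variable {hnc : IsNoncrossing (minSetoid π hdisj)}

lemma Rset_pi {r : Region n kk π} {x : Fin n} (hx : x ∈ Rset π r) (i : Fin kk) : x ∉ π i := by
  cases r with
  | none => exact ((mem_mu0_iff π).mp hx).1 i
  | some p => exact ((mem_muGap_iff π).mp hx).2.2.1 i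

include hdisj hnc in
lemma gap_eq {l l' : Fin kk} {j : Fin ((π l).card - 1)} {j' : Fin ((π l').card - 1)} {x y : Fin n}
    (hx : x ∈ muGap π l j) (hy : y ∈ muGap π l' j') (hxy : x ≤ y)
    (h1 : elg π l' j' < x) (h2 : y < elg1 π l j) :
    (⟨l, j⟩ : (i : Fin kk) × Fin ((π i).card - 1)) = ⟨l', j'⟩ := by
  obtain ⟨hex, hxf, hxp, hxn⟩ := (mem_muGap_iff π).mp hx
  obtain ⟨hey, hyf, hyp, hyn⟩ := (mem_muGap_iff π).mp hy
  rcases lt_trichotomy (elg π l j) (elg π l' j') with h|h|h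
  · have hbn : BlockNested (π l') (π l) :=
      ingap_nested π (hdisj := hdisj) (hnc := hnc) (elg_mem π l' j') h
        (lt_of_lt_of_le h1 hxy |>.trans_le h2.le)
    exact absurd (show ElemNested x (π l') from
      ⟨⟨_, elg_mem π l' j', h1⟩, ⟨_, elg1_mem π l' j', lt_of_le_of_lt hxy hyf⟩⟩) (hxn l' hbn)
  · have hll : l = l' := blk_eq π (hdisj := hdisj) (elg_mem π l j) (h ▸ elg_mem π l' j')
    subst hll
    have hjj : (j : ℕ) = (j' : ℕ) := by
      rcases Nat.lt_trichotomy (j : ℕ) (j' : ℕ) with hh|hh|hh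
      · have := el_lt_el π l (elg_lt π l j) (elg_lt π l j') hh
        rw [show el π l (j:ℕ) (elg_lt π l j) = elg π l j from rfl,
          show el π l (j':ℕ) (elg_lt π l j') = elg π l j' from rfl, h] at this
        exact absurd this (lt_irrefl _)
      · exact hh
      · have := el_lt_el π l (elg_lt π l j') (elg_lt π l j) hh
        rw [show el π l (j:ℕ) (elg_lt π l j) = elg π l j from rfl,
          show el π l (j':ℕ) (elg_lt π l j') = elg π l j' from rfl, h] at this
        exact absurd this (lt_irrefl _)
    exact congrArg (Sigma.mk l) (Fin.ext hjj)
  · have hbn : BlockNested (π l) (π l') :=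
      ingap_nested π (hdisj := hdisj) (hnc := hnc) (elg_mem π l j) h
        (lt_of_lt_of_le hex hxy |>.trans hyf)
    exact absurd (show ElemNested y (π l) from
      ⟨⟨_, elg_mem π l j, lt_of_lt_of_le hex hxy⟩, ⟨_, elg1_mem π l j, h2⟩⟩) (hyn l hbn)

include hdisj hnc in
lemma Runique {r r' : Region n kk π} {x : Fin n}
    (h : x ∈ Rset π r) (h' : x ∈ Rset π r') : r = r' := by
  match r, r' with
  | none, none => rfl
  | none, some p =>
    obtain ⟨he, hf, -, -⟩ := (mem_muGap_iff π).mp h'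
    exact absurd (show ElemNested x (π p.1) from
      ⟨⟨_, elg_mem π p.1 p.2, he⟩, ⟨_, elg1_mem π p.1 p.2, hf⟩⟩) (((mem_mu0_iff π).mp h).2 p.1)
  | some p, none =>
    obtain ⟨he, hf, -, -⟩ := (mem_muGap_iff π).mp h
    exact absurd (show ElemNested x (π p.1) from
      ⟨⟨_, elg_mem π p.1 p.2, he⟩, ⟨_, elg1_mem π p.1 p.2, hf⟩⟩) (((mem_mu0_iff π).mp h').2 p.1)
  | some p, some q =>
    have hq := (mem_muGap_iff π).mp h'
    have hp := (mem_muGap_iff π).mp h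
    have := gap_eq π (hdisj := hdisj) (hnc := hnc) (j := p.2) (j' := q.2)
      (by exact h) (by exact h') le_rfl hq.1 hp.2.1
    rw [show (⟨p.1, p.2⟩ : (i : Fin kk) × Fin ((π i).card - 1)) = p from rfl,
      show (⟨q.1, q.2⟩ : (i : Fin kk) × Fin ((π i).card - 1)) = q from rfl] at this
    exact congrArg some this

include hdisj hnc in
lemma Rcover {x : Fin n} (hx : ∀ i, x ∉ π i) : ∃ r : Region n kk π, x ∈ Rset π r := by
  classical
  by_cases hn : ∀ i, ¬ ElemNested x (π i)
  · exact ⟨none, (mem_mu0_iff π).mpr ⟨hx, hn⟩⟩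
  push_neg at hn
  obtain ⟨i0, hi0⟩ := hn
  set W : Finset (Fin n) :=
    Finset.univ.filter (fun w => w < x ∧ ∃ i, w ∈ π i ∧ ElemNested x (π i)) with hW
  have hWne : W.Nonempty := by
    obtain ⟨⟨u, hu, hux⟩, hv⟩ := hi0
    refine ⟨u, ?_⟩
    simp only [hW, Finset.mem_filter, Finset.mem_univ, true_and]
    exact ⟨hux, i0, hu, ⟨⟨u, hu, hux⟩, hv⟩⟩
  set u := W.max' hWne with hudef
  obtain ⟨-, hux, i, hui, hnesti⟩ := Finset.mem_filter.mp (W.max'_mem hWne)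
  set w : Fin (π i).card := ((π i).orderIsoOfFin rfl).symm ⟨u, hui⟩ with hwdef
  have hu_el : el π i (w : ℕ) w.isLt = u := by
    have h5 : (π i).orderIsoOfFin rfl w = ⟨u, hui⟩ := ((π i).orderIsoOfFin rfl).apply_symm_apply _
    simp only [el]
    rw [show (⟨(w:ℕ), w.isLt⟩ : Fin (π i).card) = w from rfl, h5]
  obtain ⟨-, v, hv, hxv⟩ := hnesti
  set wv : Fin (π i).card := ((π i).orderIsoOfFin rfl).symm ⟨v, hv⟩ with hwvdef
  have hv_el : el π i (wv : ℕ) wv.isLt = v := by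
    have h5 : (π i).orderIsoOfFin rfl wv = ⟨v, hv⟩ := ((π i).orderIsoOfFin rfl).apply_symm_apply _
    simp only [el]
    rw [show (⟨(wv:ℕ), wv.isLt⟩ : Fin (π i).card) = wv from rfl, h5]
  have hwlt : (w : ℕ) < (wv : ℕ) := by
    have : el π i (w : ℕ) w.isLt < el π i (wv : ℕ) wv.isLt := by
      rw [hu_el, hv_el]; exact hux.trans hxv
    exact (el_lt_el_iff π i _ _).mp this
  have hjlt : (w : ℕ) < (π i).card - 1 := by have := wv.isLt; omega
  refine ⟨some ⟨i, ⟨(w : ℕ), hjlt⟩⟩, (mem_muGap_iff π).mpr ⟨?_, ?_, hx, ?_⟩⟩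
  · exact lt_of_eq_of_lt hu_el hux
  · by_contra hcon
    push_neg at hcon
    have hne : elg1 π i ⟨(w : ℕ), hjlt⟩ ≠ x := fun h => hx i (h ▸ elg1_mem π i _)
    have hlt : elg1 π i ⟨(w : ℕ), hjlt⟩ < x := lt_of_le_of_ne hcon hne
    have hmem : elg1 π i ⟨(w : ℕ), hjlt⟩ ∈ W :=
      Finset.mem_filter.mpr ⟨Finset.mem_univ _, hlt, i, elg1_mem π i _,
        ⟨⟨u, hui, hux⟩, ⟨v, hv, hxv⟩⟩⟩
    have hle : elg1 π i ⟨(w : ℕ), hjlt⟩ ≤ u := W.le_max' _ hmem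
    have : u < elg1 π i ⟨(w : ℕ), hjlt⟩ := by
      rw [← hu_el]
      exact el_lt_el π i _ _ (Nat.lt_succ_self _)
    exact absurd hle (not_le.mpr this)
  · rintro l ⟨⟨u0, hu0, hu0lt⟩, ⟨v0, hv0, hv0gt⟩⟩ ⟨⟨p, hp, hpx⟩, ⟨q, hq, hxq⟩⟩
    have hli : l ≠ i := by
      rintro rfl
      exact absurd (hu0lt u0 hu0) (lt_irrefl u0)
    have hpW : p ≤ u := W.le_max' p (Finset.mem_filter.mpr
      ⟨Finset.mem_univ _, hpx, l, hp, ⟨⟨p, hp, hpx⟩, ⟨q, hq, hxq⟩⟩⟩)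
    rcases eq_or_lt_of_le hpW with heq|hplt
    · exact hli (blk_eq π (hdisj := hdisj) (show u ∈ π l from heq ▸ hp) hui)
    · exact hli (hncE π (hdisj := hdisj) (hnc := hnc) hplt (hux.trans hxq) (hv0gt q hq)
        hp hq hui hv0)

end Aux3
section Aux4

variable {n kk : ℕ} (π : Fin kk → Finset (Fin n))
variable {hdisj : ∀ i j, i ≠ j → Disjoint (π i) (π j)}
variable {hnc : IsNoncrossing (minSetoid π hdisj)}

include hdisj hnc in
/-- two elements of the same region are not half-separated by a pair in some `π l`
(pattern `u < x < v < y`). -/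
lemma nosep1 {r : Region n kk π} {x y u v : Fin n} {l : Fin kk}
    (hx : x ∈ Rset π r) (hy : y ∈ Rset π r) (hu : u ∈ π l) (hv : v ∈ π l)
    (h1 : u < x) (h2 : x < v) (h3 : v < y) : False := by
  cases r with
  | none =>
    exact ((mem_mu0_iff π).mp hx).2 l ⟨⟨u, hu, h1⟩, ⟨v, hv, h2⟩⟩
  | some p =>
    obtain ⟨hex, hxf, -, hxn⟩ := (mem_muGap_iff π).mp hx
    obtain ⟨hey, hyf, -, -⟩ := (mem_muGap_iff π).mp hy
    have hbn : BlockNested (π l) (π p.1) :=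
      ingap_nested π (hdisj := hdisj) (hnc := hnc) hv (hex.trans h2) (h3.trans hyf)
    exact hxn l hbn ⟨⟨u, hu, h1⟩, ⟨v, hv, h2⟩⟩

include hdisj hnc in
/-- pattern `x < u < y < v`. -/
lemma nosep2 {r : Region n kk π} {x y u v : Fin n} {l : Fin kk}
    (hx : x ∈ Rset π r) (hy : y ∈ Rset π r) (hu : u ∈ π l) (hv : v ∈ π l)
    (h1 : x < u) (h2 : u < y) (h3 : y < v) : False := by
  cases r with
  | none =>
    exact ((mem_mu0_iff π).mp hy).2 l ⟨⟨u, hu, h2⟩, ⟨v, hv, h3⟩⟩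
  | some p =>
    obtain ⟨hex, hxf, -, -⟩ := (mem_muGap_iff π).mp hx
    obtain ⟨hey, hyf, -, hyn⟩ := (mem_muGap_iff π).mp hy
    have hbn : BlockNested (π l) (π p.1) :=
      ingap_nested π (hdisj := hdisj) (hnc := hnc) hu (hex.trans h1) (h2.trans hyf)
    exact hyn l hbn ⟨⟨u, hu, h2⟩, ⟨v, hv, h3⟩⟩

include hdisj hnc in
/-- elements of distinct regions are half-separated by a pair in some `π l`. -/
lemma sep {r r' : Region n kk π} {x y : Fin n}
    (hx : x ∈ Rset π r) (hy : y ∈ Rset π r') (hxy : x < y) (hrr : r ≠ r') :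
    ∃ l u v, u ∈ π l ∧ v ∈ π l ∧
      ((u < x ∧ x < v ∧ v < y) ∨ (x < u ∧ u < y ∧ y < v)) := by
  match r, r' with
  | none, none => exact absurd rfl hrr
  | none, some p =>
    obtain ⟨hey, hyf, -, -⟩ := (mem_muGap_iff π).mp hy
    rcases lt_trichotomy x (elg π p.1 p.2) with h|h|h
    · exact ⟨p.1, elg π p.1 p.2, elg1 π p.1 p.2, elg_mem π p.1 p.2, elg1_mem π p.1 p.2,
        Or.inr ⟨h, hey, hyf⟩⟩
    · exact absurd (h ▸ elg_mem π p.1 p.2) (((mem_mu0_iff π).mp hx).1 p.1)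
    · exact absurd (show ElemNested x (π p.1) from
        ⟨⟨_, elg_mem π p.1 p.2, h⟩, ⟨_, elg1_mem π p.1 p.2, hxy.trans hyf⟩⟩)
        (((mem_mu0_iff π).mp hx).2 p.1)
  | some p, none =>
    obtain ⟨hex, hxf, -, -⟩ := (mem_muGap_iff π).mp hx
    rcases lt_trichotomy (elg1 π p.1 p.2) y with h|h|h
    · exact ⟨p.1, elg π p.1 p.2, elg1 π p.1 p.2, elg_mem π p.1 p.2, elg1_mem π p.1 p.2,
        Or.inl ⟨hex, hxf, h⟩⟩
    · exact absurd (h ▸ elg1_mem π p.1 p.2) (((mem_mu0_iff π).mp hy).1 p.1)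
    · exact absurd (show ElemNested y (π p.1) from
        ⟨⟨_, elg_mem π p.1 p.2, hex.trans hxy⟩, ⟨_, elg1_mem π p.1 p.2, h⟩⟩)
        (((mem_mu0_iff π).mp hy).2 p.1)
  | some p, some q =>
    obtain ⟨hex, hxf, hxpi, -⟩ := (mem_muGap_iff π).mp hx
    obtain ⟨hey, hyf, hypi, -⟩ := (mem_muGap_iff π).mp hy
    rcases lt_trichotomy (elg1 π p.1 p.2) y with h|h|h
    · exact ⟨p.1, elg π p.1 p.2, elg1 π p.1 p.2, elg_mem π p.1 p.2, elg1_mem π p.1 p.2,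
        Or.inl ⟨hex, hxf, h⟩⟩
    · exact absurd (h ▸ elg1_mem π p.1 p.2) (hypi p.1)
    · rcases lt_trichotomy x (elg π q.1 q.2) with h'|h'|h'
      · exact ⟨q.1, elg π q.1 q.2, elg1 π q.1 q.2, elg_mem π q.1 q.2, elg1_mem π q.1 q.2,
          Or.inr ⟨h', hey, hyf⟩⟩
      · exact absurd (h' ▸ elg_mem π q.1 q.2) (hxpi q.1)
      · have := gap_eq π (hdisj := hdisj) (hnc := hnc) (j := p.2) (j' := q.2)
          (by exact hx) (by exact hy) hxy.le h' h
        rw [show (⟨p.1, p.2⟩ : (i : Fin kk) × Fin ((π i).card - 1)) = p from rfl,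
          show (⟨q.1, q.2⟩ : (i : Fin kk) × Fin ((π i).card - 1)) = q from rfl] at this
        exact absurd (congrArg some this) hrr

include hdisj hnc in
/-- interleaving elements of regions forces the regions to be equal. -/
lemma regM {r r' : Region n kk π} {a b c d : Fin n}
    (ha : a ∈ Rset π r) (hc : c ∈ Rset π r) (hb : b ∈ Rset π r') (hd : d ∈ Rset π r')
    (h1 : a < b) (h2 : b < c) (h3 : c < d) : r = r' := by
  by_contra hne
  obtain ⟨l, u, v, hu, hv, hcase⟩ :=
    sep π (hdisj := hdisj) (hnc := hnc) hb hc h2 (Ne.symm hne)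
  rcases hcase with ⟨huB, hBv, hvC⟩ | ⟨hBu, huC, hCv⟩
  · exact nosep1 π (hdisj := hdisj) (hnc := hnc) hb hd hu hv huB hBv (hvC.trans h3)
  · exact nosep2 π (hdisj := hdisj) (hnc := hnc) ha hc hu hv (h1.trans hBu) huC hCv

end Aux4
section Aux5

variable {n : ℕ}

/-- the increasing enumeration of a finset -/
noncomputable def remb (S : Finset (Fin n)) : Fin S.card → Fin n :=
  fun a => ((S.orderIsoOfFin rfl a : {x // x ∈ S}) : Fin n)

lemma remb_mem (S : Finset (Fin n)) (a : Fin S.card) : remb S a ∈ S :=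
  (S.orderIsoOfFin rfl a).2

lemma remb_strictMono (S : Finset (Fin n)) : StrictMono (remb S) := fun a b h =>
  Subtype.coe_lt_coe.mpr ((S.orderIsoOfFin rfl).lt_iff_lt.mpr h)

/-- the index of an element of a finset -/
noncomputable def ridx (S : Finset (Fin n)) (x : Fin n) (hx : x ∈ S) : Fin S.card :=
  (S.orderIsoOfFin rfl).symm ⟨x, hx⟩

@[simp] lemma remb_ridx (S : Finset (Fin n)) (x : Fin n) (hx : x ∈ S) :
    remb S (ridx S x hx) = x := by
  simp only [remb, ridx, OrderIso.apply_symm_apply]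

@[simp] lemma ridx_remb (S : Finset (Fin n)) (a : Fin S.card) :
    ridx S (remb S a) (remb_mem S a) = a := by
  simp only [ridx, remb]
  rw [show (⟨((S.orderIsoOfFin rfl a : {x // x ∈ S}) : Fin n), remb_mem S a⟩ :
    {x // x ∈ S}) = S.orderIsoOfFin rfl a from Subtype.ext rfl]
  exact (S.orderIsoOfFin rfl).symm_apply_apply a

lemma ridx_lt (S : Finset (Fin n)) {x y : Fin n} (hx : x ∈ S) (hy : y ∈ S) (h : x < y) :
    ridx S x hx < ridx S y hy := by
  have := (remb_strictMono S).lt_iff_lt (a := ridx S x hx) (b := ridx S y hy)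
  rw [remb_ridx, remb_ridx] at this
  exact this.mp h

end Aux5

section Aux6

variable {n kk : ℕ} (π : Fin kk → Finset (Fin n))

/-- the relation underlying the partition assembled from the blocks `π i` and a family of
partitions of the regions. -/
def bwdRel (fam : (r : Region n kk π) → NCP (Rset π r).card) (x y : Fin n) : Prop :=
  x = y ∨ (∃ i, x ∈ π i ∧ y ∈ π i) ∨
    ∃ r, ∃ hx : x ∈ Rset π r, ∃ hy : y ∈ Rset π r,
      (fam r).1 (ridx (Rset π r) x hx) (ridx (Rset π r) y hy)

lemma bwdRel_symm {fam : (r : Region n kk π) → NCP (Rset π r).card} {x y : Fin n}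
    (h : bwdRel π fam x y) : bwdRel π fam y x := by
  rcases h with rfl | ⟨i, h1, h2⟩ | ⟨r, hx, hy, hs⟩
  · exact Or.inl rfl
  · exact Or.inr (Or.inl ⟨i, h2, h1⟩)
  · exact Or.inr (Or.inr ⟨r, hy, hx, (fam r).1.symm' hs⟩)

/-- the partition assembled from the blocks `π i` and a family of partitions of the regions -/
noncomputable def bwdSetoid (hdisj : ∀ i j, i ≠ j → Disjoint (π i) (π j))
    (hnc : IsNoncrossing (minSetoid π hdisj))
    (fam : (r : Region n kk π) → NCP (Rset π r).card) : Setoid (Fin n) where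
  r := bwdRel π fam
  iseqv := by
    constructor
    · exact fun x => Or.inl rfl
    · exact fun h => bwdRel_symm π h
    · rintro x y z (rfl | ⟨i, hx, hy⟩ | ⟨r, hx, hy, hs⟩) h2
      · exact h2
      · rcases h2 with rfl | ⟨t, hy', hz⟩ | ⟨r, hy', hz, hs⟩
        · exact Or.inr (Or.inl ⟨i, hx, hy⟩)
        · exact Or.inr (Or.inl ⟨i, hx, (blk_eq π (hdisj := hdisj) hy' hy) ▸ hz⟩)
        · exact absurd hy (Rset_pi π hy' i)
      · rcases h2 with rfl | ⟨t, hy', hz⟩ | ⟨r', hy', hz, hs'⟩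
        · exact Or.inr (Or.inr ⟨r, hx, hy, hs⟩)
        · exact absurd hy' (Rset_pi π hy t)
        · obtain rfl : r = r' := Runique π (hdisj := hdisj) (hnc := hnc) hy hy'
          exact Or.inr (Or.inr ⟨r, hx, hz, (fam r).1.trans' hs hs'⟩)

variable {hdisj : ∀ i j, i ≠ j → Disjoint (π i) (π j)}
variable {hnc : IsNoncrossing (minSetoid π hdisj)}

lemma bwd_iff {fam : (r : Region n kk π) → NCP (Rset π r).card} {x y : Fin n} :
    (bwdSetoid π hdisj hnc fam) x y ↔ bwdRel π fam x y := Iff.rfl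

include hdisj hnc in
lemma bwd_nc (fam : (r : Region n kk π) → NCP (Rset π r).card) :
    IsNoncrossing (bwdSetoid π hdisj hnc fam) := by
  intro a b c d h1 h2 h3 hac hbd
  rw [bwd_iff] at hac hbd ⊢
  rcases hac with rfl | ⟨i, hai, hci⟩ | ⟨r, har, hcr, hsr⟩
  · exact absurd (h1.trans h2) (lt_irrefl a)
  · rcases hbd with rfl | ⟨t, hbt, hdt⟩ | ⟨r, hbr, hdr, hsr⟩
    · exact absurd (h2.trans h3) (lt_irrefl b)
    · have h := hnc a b c d h1 h2 h3 (Or.inr ⟨i, hai, hci⟩) (Or.inr ⟨t, hbt, hdt⟩)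
      rcases h with h | ⟨s, h1s, h2s⟩
      · exact Or.inl h
      · exact Or.inr (Or.inl ⟨s, h1s, h2s⟩)
    · cases r with
      | none =>
        exact absurd (show ElemNested b (π i) from ⟨⟨a, hai, h1⟩, ⟨c, hci, h2⟩⟩)
          (((mem_mu0_iff π).mp hbr).2 i)
      | some p =>
        obtain ⟨heb, hbf, -, hbn⟩ := (mem_muGap_iff π).mp hbr
        obtain ⟨hed, hdf, -, -⟩ := (mem_muGap_iff π).mp hdr
        have hnst : BlockNested (π i) (π p.1) :=
          ingap_nested π (hdisj := hdisj) (hnc := hnc) hci (heb.trans h2) (h3.trans hdf)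
        exact absurd (show ElemNested b (π i) from ⟨⟨a, hai, h1⟩, ⟨c, hci, h2⟩⟩) (hbn i hnst)
  · rcases hbd with rfl | ⟨t, hbt, hdt⟩ | ⟨r', hbr, hdr, hsr'⟩
    · exact absurd (h2.trans h3) (lt_irrefl b)
    · cases r with
      | none =>
        exact absurd (show ElemNested c (π t) from ⟨⟨b, hbt, h2⟩, ⟨d, hdt, h3⟩⟩)
          (((mem_mu0_iff π).mp hcr).2 t)
      | some p =>
        obtain ⟨hea, haf, -, -⟩ := (mem_muGap_iff π).mp har
        obtain ⟨hec, hcf, -, hcn⟩ := (mem_muGap_iff π).mp hcr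
        have hnst : BlockNested (π t) (π p.1) :=
          ingap_nested π (hdisj := hdisj) (hnc := hnc) hbt (hea.trans h1) (h2.trans hcf)
        exact absurd (show ElemNested c (π t) from ⟨⟨b, hbt, h2⟩, ⟨d, hdt, h3⟩⟩) (hcn t hnst)
    · obtain rfl : r = r' :=
        regM π (hdisj := hdisj) (hnc := hnc) har hcr hbr hdr h1 h2 h3
      have hσ := (fam r).2 _ _ _ _ (ridx_lt _ har hbr h1) (ridx_lt _ hbr hcr h2)
        (ridx_lt _ hcr hdr h3) hsr hsr'
      exact Or.inr (Or.inr ⟨r, har, hbr, hσ⟩)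

include hdisj hnc in
lemma bwd_block (hne : ∀ i, (π i).Nonempty)
    (fam : (r : Region n kk π) → NCP (Rset π r).card) (i : Fin kk) :
    IsBlock (bwdSetoid π hdisj hnc fam) (π i) := by
  obtain ⟨x, hx⟩ := hne i
  refine ⟨x, fun y => ⟨fun hy => Or.inr (Or.inl ⟨i, hx, hy⟩), ?_⟩⟩
  rintro (rfl | ⟨t, hxt, hyt⟩ | ⟨r, hxr, -, -⟩)
  · exact hx
  · exact (blk_eq π (hdisj := hdisj) hxt hx) ▸ hyt
  · exact absurd hx (Rset_pi π hxr i)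

end Aux6
section Aux7

variable {n kk : ℕ} (π : Fin kk → Finset (Fin n))

/-- restriction of a partition to a region -/
noncomputable def fwdS (μ : Setoid (Fin n)) (r : Region n kk π) :
    Setoid (Fin (Rset π r).card) :=
  Setoid.comap (remb (Rset π r)) μ

lemma fwdS_nc (μ : NCP n) (r : Region n kk π) : IsNoncrossing (fwdS π μ.1 r) :=
  isNoncrossing_comap_of_monotone _ (remb_strictMono _).monotone μ.2

/-- the family of restrictions of a partition to all regions -/
noncomputable def fwdFam (μ : NCP n) : (r : Region n kk π) → NCP (Rset π r).card :=
  fun r => ⟨fwdS π μ.1 r, fwdS_nc π μ r⟩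

variable {hdisj : ∀ i j, i ≠ j → Disjoint (π i) (π j)}
variable {hnc : IsNoncrossing (minSetoid π hdisj)}

include hdisj hnc in
lemma fwd_bwd (fam : (r : Region n kk π) → NCP (Rset π r).card) (r : Region n kk π) :
    fwdS π (bwdSetoid π hdisj hnc fam) r = (fam r).1 := by
  apply Setoid.ext
  intro a b
  constructor
  · intro h
    have h' : bwdRel π fam (remb (Rset π r) a) (remb (Rset π r) b) := h
    rcases h' with heq | ⟨i, h1, h2⟩ | ⟨r', h1, h2, hs⟩
    · have hab : a = b := (remb_strictMono (Rset π r)).injective heq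
      exact hab ▸ (fam r).1.refl' a
    · exact absurd h1 (Rset_pi π (remb_mem _ a) i)
    · obtain rfl : r = r' := Runique π (hdisj := hdisj) (hnc := hnc) (remb_mem _ a) h1
      have e1 : ridx (Rset π r) (remb (Rset π r) a) h1 = a := ridx_remb (Rset π r) a
      have e2 : ridx (Rset π r) (remb (Rset π r) b) h2 = b := ridx_remb (Rset π r) b
      rwa [e1, e2] at hs
  · intro h
    refine Or.inr (Or.inr ⟨r, remb_mem _ a, remb_mem _ b, ?_⟩)
    rw [ridx_remb, ridx_remb]
    exact h

include hdisj hnc in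
lemma bwd_fwd (μ : NCP n) (hblk : ∀ i, IsBlock μ.1 (π i))
    (fam : (r : Region n kk π) → NCP (Rset π r).card)
    (hfam : ∀ r, (fam r).1 = fwdS π μ.1 r) :
    bwdSetoid π hdisj hnc fam = μ.1 := by
  apply Setoid.ext
  intro x y
  constructor
  · rintro (rfl | ⟨i, h1, h2⟩ | ⟨r, hx, hy, hs⟩)
    · exact μ.1.refl' x
    · obtain ⟨x₀, hx₀⟩ := hblk i
      exact μ.1.trans' (μ.1.symm' ((hx₀ x).mp h1)) ((hx₀ y).mp h2)
    · rw [hfam r] at hs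
      have h' : μ.1 (remb _ (ridx _ x hx)) (remb _ (ridx _ y hy)) := hs
      rwa [remb_ridx, remb_ridx] at h'
  · intro hμ
    by_cases hxy : x = y
    · exact Or.inl hxy
    by_cases hxp : ∃ i, x ∈ π i
    · obtain ⟨i, hxi⟩ := hxp
      obtain ⟨x₀, hx₀⟩ := hblk i
      have hyi : y ∈ π i := (hx₀ y).mpr (μ.1.trans' ((hx₀ x).mp hxi) hμ)
      exact Or.inr (Or.inl ⟨i, hxi, hyi⟩)
    push_neg at hxp
    have hyp : ∀ i, y ∉ π i := by
      intro i hyi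
      obtain ⟨x₀, hx₀⟩ := hblk i
      exact hxp i ((hx₀ x).mpr (μ.1.trans' ((hx₀ y).mp hyi) (μ.1.symm' hμ)))
    obtain ⟨r, hxr⟩ := Rcover π (hdisj := hdisj) (hnc := hnc) hxp
    obtain ⟨r', hyr⟩ := Rcover π (hdisj := hdisj) (hnc := hnc) hyp
    have key : ∀ (x y : Fin n) (r r' : Region n kk π), x < y → μ.1 x y →
        x ∈ Rset π r → y ∈ Rset π r' → r = r' := by
      intro x y r r' hlt hμ hxr hyr
      by_contra hne
      obtain ⟨l, u, v, hu, hv, hcase⟩ :=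
        sep π (hdisj := hdisj) (hnc := hnc) hxr hyr hlt hne
      obtain ⟨z₀, hz₀⟩ := hblk l
      have huv : μ.1 u v := μ.1.trans' (μ.1.symm' ((hz₀ u).mp hu)) ((hz₀ v).mp hv)
      rcases hcase with ⟨a1, a2, a3⟩ | ⟨a1, a2, a3⟩
      · have hux : μ.1 u x := μ.2 u x v y a1 a2 a3 huv hμ
        exact Rset_pi π hxr l ((hz₀ x).mpr (μ.1.trans' ((hz₀ u).mp hu) hux))
      · have hxu : μ.1 x u := μ.2 x u y v a1 a2 a3 hμ huv
        exact Rset_pi π hxr l ((hz₀ x).mpr (μ.1.trans' ((hz₀ u).mp hu) (μ.1.symm' hxu)))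
    have hrr : r = r' := by
      rcases lt_or_gt_of_ne hxy with h|h
      · exact key x y r r' h hμ hxr hyr
      · exact (key y x r' r h (μ.1.symm' hμ) hyr hxr).symm
    subst hrr
    refine Or.inr (Or.inr ⟨r, hxr, hyr, ?_⟩)
    rw [hfam r]
    show μ.1 (remb _ (ridx _ x hxr)) (remb _ (ridx _ y hyr))
    rw [remb_ridx, remb_ridx]
    exact hμ

include hdisj hnc in
lemma bwd_mono {fam fam' : (r : Region n kk π) → NCP (Rset π r).card}
    (h : ∀ r, (fam r).1 ≤ (fam' r).1) :
    bwdSetoid π hdisj hnc fam ≤ bwdSetoid π hdisj hnc fam' := by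
  intro x y hxy
  rcases hxy with rfl | ⟨i, h1, h2⟩ | ⟨r, hx, hy, hs⟩
  · exact Or.inl rfl
  · exact Or.inr (Or.inl ⟨i, h1, h2⟩)
  · exact Or.inr (Or.inr ⟨r, hx, hy, h r hs⟩)

end Aux7
section Aux8

variable {n kk : ℕ} (π : Fin kk → Finset (Fin n))

lemma block_self {μ : Setoid (Fin n)} {B : Finset (Fin n)} (h : IsBlock μ B) {x : Fin n}
    (hx : x ∈ B) (y : Fin n) : y ∈ B ↔ μ x y := by
  obtain ⟨x₀, h₀⟩ := h
  constructor
  · intro hy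
    exact μ.trans' (μ.symm' ((h₀ x).mp hx)) ((h₀ y).mp hy)
  · intro hy
    exact (h₀ y).mpr (μ.trans' ((h₀ x).mp hx) hy)

/-- the product of the region lattices -/
abbrev RProd (n kk : ℕ) (π : Fin kk → Finset (Fin n)) : Type :=
  NCP (mu0 π).card ×
    ((i : Fin kk) → (j : Fin ((π i).card - 1)) → NCP ((muGap π i j).card))

/-- reindexing a member of the product as a family over regions -/
noncomputable def prodToFam (q : RProd n kk π) : (r : Region n kk π) → NCP (Rset π r).card :=
  fun r => match r with
  | none => q.1
  | some p => q.2 p.1 p.2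

variable {hdisj : ∀ i j, i ≠ j → Disjoint (π i) (π j)}
variable {hnc : IsNoncrossing (minSetoid π hdisj)}
variable (hne : ∀ i, (π i).Nonempty)

/-- the forward map of the isomorphism -/
noncomputable def isoFwd (μ : {μ : NCP n // ∀ i, IsBlock μ.1 (π i)}) : RProd n kk π :=
  (⟨fwdS π μ.1.1 none, fwdS_nc π μ.1 none⟩,
    fun i j => ⟨fwdS π μ.1.1 (some ⟨i, j⟩), fwdS_nc π μ.1 (some ⟨i, j⟩)⟩)

/-- the backward map of the isomorphism -/
noncomputable def isoBwd (q : RProd n kk π) : {μ : NCP n // ∀ i, IsBlock μ.1 (π i)} :=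
  ⟨⟨bwdSetoid π hdisj hnc (prodToFam π q),
    bwd_nc π (hdisj := hdisj) (hnc := hnc) (prodToFam π q)⟩,
    bwd_block π (hdisj := hdisj) (hnc := hnc) hne (prodToFam π q)⟩

lemma prodToFam_isoFwd (μ : {μ : NCP n // ∀ i, IsBlock μ.1 (π i)}) (r : Region n kk π) :
    (prodToFam π (isoFwd π μ) r).1 = fwdS π μ.1.1 r := by
  cases r with
  | none => rfl
  | some p => rfl

include hdisj hnc in
lemma iso_left_inv (μ : {μ : NCP n // ∀ i, IsBlock μ.1 (π i)}) :
    isoBwd π (hdisj := hdisj) (hnc := hnc) hne (isoFwd π μ) = μ := by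
  apply Subtype.ext
  apply Subtype.ext
  exact bwd_fwd π (hdisj := hdisj) (hnc := hnc) μ.1 μ.2 _ (prodToFam_isoFwd π μ)

include hdisj hnc in
lemma iso_right_inv (q : RProd n kk π) :
    isoFwd π (isoBwd π (hdisj := hdisj) (hnc := hnc) hne q) = q := by
  refine Prod.ext ?_ ?_
  · exact Subtype.ext (fwd_bwd π (hdisj := hdisj) (hnc := hnc) (prodToFam π q) none)
  · funext i j
    exact Subtype.ext (fwd_bwd π (hdisj := hdisj) (hnc := hnc) (prodToFam π q) (some ⟨i, j⟩))

include hdisj hnc in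
lemma iso_fwd_le {μ ν : {μ : NCP n // ∀ i, IsBlock μ.1 (π i)}} :
    isoFwd π μ ≤ isoFwd π ν ↔ μ ≤ ν := by
  constructor
  · intro h
    have hcomp : ∀ r, (prodToFam π (isoFwd π μ) r).1 ≤ (prodToFam π (isoFwd π ν) r).1 := by
      intro r
      cases r with
      | none => exact h.1
      | some p => exact h.2 p.1 p.2
    show μ.1.1 ≤ ν.1.1
    calc μ.1.1 = bwdSetoid π hdisj hnc (prodToFam π (isoFwd π μ)) :=
          (bwd_fwd π (hdisj := hdisj) (hnc := hnc) μ.1 μ.2 _ (prodToFam_isoFwd π μ)).symm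
      _ ≤ bwdSetoid π hdisj hnc (prodToFam π (isoFwd π ν)) :=
          bwd_mono π (hdisj := hdisj) (hnc := hnc) hcomp
      _ = ν.1.1 := bwd_fwd π (hdisj := hdisj) (hnc := hnc) ν.1 ν.2 _ (prodToFam_isoFwd π ν)
  · intro h
    have h' : μ.1.1 ≤ ν.1.1 := h
    constructor
    · intro x y hxy
      exact h' hxy
    · intro i j x y hxy
      exact h' hxy

end Aux8
/-- Let `π_1, …, π_k` be pairwise disjoint, mutually
noncrossing, nonempty subsets of `[n]`.  Then the set `NCP_π(n)` of
noncrossing partitions having each `π_i` as a block is a sublattice of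
`(NCP(n), |)` (closed under meet and join), and it is isomorphic as a lattice
to the cartesian product of the lattices `NCP(μ_0)` and `NCP(μ_i^j)`,
`i = 1,…,k`, `j = 1,…,|π_i|−1`. -/
theorem relative_lattice_structure (n kk : ℕ) (π : Fin kk → Finset (Fin n))
    (hne : ∀ i, (π i).Nonempty)
    (hdisj : ∀ i j, i ≠ j → Disjoint (π i) (π j))
    (hnc : IsNoncrossing (minSetoid π hdisj)) :
    (∀ μ ν : NCP n, (∀ i, IsBlock μ.1 (π i)) → (∀ i, IsBlock ν.1 (π i)) →
      (∀ i, IsBlock (μ ⊔ ν).1 (π i)) ∧ (∀ i, IsBlock (μ ⊓ ν).1 (π i))) ∧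
    Nonempty ({μ : NCP n // ∀ i, IsBlock μ.1 (π i)} ≃o
      (NCP (mu0 π).card ×
        ((i : Fin kk) → (j : Fin ((π i).card - 1)) → NCP ((muGap π i j).card)))) := by
  classical
  constructor
  · intro μ ν hμ hν
    constructor
    · intro i
      set fam : (r : Region n kk π) → NCP (Rset π r).card :=
        fun r => (⟨fwdS π μ.1 r, fwdS_nc π μ r⟩ : NCP _) ⊔ ⟨fwdS π ν.1 r, fwdS_nc π ν r⟩
        with hfam
      have hμT : μ.1 ≤ bwdSetoid π hdisj hnc fam := by
        have h1 : bwdSetoid π hdisj hnc (fwdFam π μ) = μ.1 :=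
          bwd_fwd π (hdisj := hdisj) (hnc := hnc) μ hμ (fwdFam π μ) (fun r => rfl)
        rw [← h1]
        refine bwd_mono π (hdisj := hdisj) (hnc := hnc) (fun r => ?_)
        exact (le_sup_left :
          (⟨fwdS π μ.1 r, fwdS_nc π μ r⟩ : NCP (Rset π r).card) ≤ _)
      have hνT : ν.1 ≤ bwdSetoid π hdisj hnc fam := by
        have h1 : bwdSetoid π hdisj hnc (fwdFam π ν) = ν.1 :=
          bwd_fwd π (hdisj := hdisj) (hnc := hnc) ν hν (fwdFam π ν) (fun r => rfl)
        rw [← h1]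
        refine bwd_mono π (hdisj := hdisj) (hnc := hnc) (fun r => ?_)
        exact (le_sup_right :
          _ ≤ (⟨fwdS π μ.1 r, fwdS_nc π μ r⟩ : NCP (Rset π r).card) ⊔ _)
      have hle : (μ ⊔ ν).1 ≤ bwdSetoid π hdisj hnc fam := by
        show ncSup μ.1 ν.1 ≤ _
        exact sInf_le ⟨bwd_nc π (hdisj := hdisj) (hnc := hnc) fam, hμT, hνT⟩
      obtain ⟨x, hx⟩ := hne i
      have hblkT := bwd_block π (hdisj := hdisj) (hnc := hnc) hne fam i
      refine ⟨x, fun y => ⟨?_, ?_⟩⟩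
      · intro hy
        have hrel : μ.1 x y := (block_self (hμ i) hx y).mp hy
        have hμs : μ.1 ≤ (μ ⊔ ν).1 := (le_sup_left : μ ≤ μ ⊔ ν)
        exact hμs hrel
      · intro hy
        exact (block_self hblkT hx y).mpr (hle hy)
    · intro i
      obtain ⟨x, hx⟩ := hne i
      refine ⟨x, fun y => ?_⟩
      have hμiff := block_self (hμ i) hx y
      have hνiff := block_self (hν i) hx y
      constructor
      · intro hy
        show (μ ⊓ ν).1 x y
        rw [show (((μ ⊓ ν).1 : Setoid (Fin n)) : Fin n → Fin n → Prop) = ⇑μ.1 ⊓ ⇑ν.1 from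
          Setoid.inf_def]
        exact ⟨hμiff.mp hy, hνiff.mp hy⟩
      · intro hy
        have hy' : (((μ ⊓ ν).1 : Setoid (Fin n)) : Fin n → Fin n → Prop) x y := hy
        rw [show (((μ ⊓ ν).1 : Setoid (Fin n)) : Fin n → Fin n → Prop) = ⇑μ.1 ⊓ ⇑ν.1 from
          Setoid.inf_def] at hy'
        exact hμiff.mpr hy'.1
  · exact ⟨⟨⟨isoFwd π, isoBwd π (hdisj := hdisj) (hnc := hnc) hne,
      iso_left_inv π (hdisj := hdisj) (hnc := hnc) hne,
      iso_right_inv π (hdisj := hdisj) (hnc := hnc) hne⟩,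
      iso_fwd_le π (hdisj := hdisj) (hnc := hnc)⟩⟩
end

section
/- A noncrossing partition α ∈ NCP(pn) is in the image of the p-th power map NCP(n) → NCP(pn) if and only if α = α ∨ {{1,…,p},{p+1,…,2p},…,{pn−p+1,…,pn}} in the lattice NCP(pn). -/
open scoped BigOperators

/-- A noncrossing partition `α ∈ NCP(pn)` is in the image of the
`p`-th power map `NCP(n) → NCP(pn)` iff
`α = α ∨ {{1,…,p},{p+1,…,2p},…,{pn−p+1,…,pn}}` in the lattice `NCP(pn)`. -/
theorem npow_mem_image_iff (n p : ℕ) (α : NCP (p*n)) :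
    (∃ π : NCP n, npow p π = α) ↔ α = α ⊔ intervalNCP p n := by
  rw [left_eq_sup]
  constructor
  · rintro ⟨π, rfl⟩
    show intervalSetoid p n ≤ (npow p π).1
    intro x y h
    have hx : (x:ℕ)/p = (y:ℕ)/p := h
    show π.1 ⟨(x:ℕ)/p, _⟩ ⟨(y:ℕ)/p, _⟩
    have he : (⟨(x:ℕ)/p, by
        have hxl := x.isLt
        rcases Nat.eq_zero_or_pos p with h0|h0
        · subst h0; exact absurd hxl (by omega)
        · exact Nat.div_lt_of_lt_mul hxl⟩ : Fin n) = ⟨(y:ℕ)/p, by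
        have hyl := y.isLt
        rcases Nat.eq_zero_or_pos p with h0|h0
        · subst h0; exact absurd hyl (by omega)
        · exact Nat.div_lt_of_lt_mul hyl⟩ := Fin.ext hx
    rw [he]
  · intro hle
    rcases Nat.eq_zero_or_pos p with hp | hp
    · subst hp
      refine ⟨⊥, Subtype.ext (Setoid.ext fun x => ?_)⟩
      exact absurd x.isLt (by omega)
    · have hmul : ∀ i : Fin n, (i:ℕ) * p < p * n := fun i => by
        have := i.isLt
        calc (i:ℕ) * p < n * p := Nat.mul_lt_mul_of_lt_of_le i.isLt (le_refl p) hp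
        _ = p * n := Nat.mul_comm n p
      set f : Fin n → Fin (p*n) := fun i => ⟨(i:ℕ) * p, hmul i⟩ with hf
      have hmono : Monotone f := fun i j h => by
        simp only [hf, Fin.mk_le_mk]
        exact Nat.mul_le_mul_right p h
      refine ⟨⟨Setoid.comap f α.1, isNoncrossing_comap_of_monotone f hmono α.2⟩,
        Subtype.ext (Setoid.ext fun x y => ?_)⟩
      have key : ∀ z : Fin (p*n), α.1 z (f ⟨(z:ℕ)/p, Nat.div_lt_of_lt_mul z.isLt⟩) := by
        intro z
        apply hle
        show (z:ℕ)/p = ((z:ℕ)/p * p)/p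
        rw [Nat.mul_div_cancel _ hp]
      constructor
      · intro h
        have h' : α.1 (f ⟨(x:ℕ)/p, Nat.div_lt_of_lt_mul x.isLt⟩)
            (f ⟨(y:ℕ)/p, Nat.div_lt_of_lt_mul y.isLt⟩) := h
        exact α.1.trans' (key x) (α.1.trans' h' (α.1.symm' (key y)))
      · intro h
        show α.1 (f ⟨(x:ℕ)/p, Nat.div_lt_of_lt_mul x.isLt⟩)
            (f ⟨(y:ℕ)/p, Nat.div_lt_of_lt_mul y.isLt⟩)
        exact α.1.trans' (α.1.symm' (key x)) (α.1.trans' h (key y))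
end

section
/- Let (α, β) ∈ NCP(kn) × NCP(ln). If (α, β) is n-admissible and α′ | α, β′ | β, then (α′, β′) is n-admissible. Conversely, if (α, β) is not n-admissible and α | α′, β | β′, then (α′, β′) is not n-admissible. -/
open scoped BigOperators

/-- Decoding map for the `n`-perfect shuffle of `α ∈ NCP(kn)` and `β ∈ NCP(ln)`:
position `a(k+l)+j` (`1 ≤ j ≤ k`) comes from position `ak+j` of `α`, and
position `a(k+l)+k+j` (`1 ≤ j ≤ l`) comes from position `al+j` of `β`. -/
def decodeKL (n k l : ℕ) (x : Fin ((k+l)*n)) : Fin (k*n) ⊕ Fin (l*n) :=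
  if h : (x:ℕ) % (k+l) < k then
    Sum.inl ⟨((x:ℕ)/(k+l))*k + (x:ℕ)%(k+l), by
      have hx := x.isLt
      have ha : (x:ℕ)/(k+l) < n := Nat.div_lt_of_lt_mul hx
      calc ((x:ℕ)/(k+l))*k + (x:ℕ)%(k+l) < ((x:ℕ)/(k+l))*k + k := Nat.add_lt_add_left h _
        _ = ((x:ℕ)/(k+l) + 1)*k := (Nat.succ_mul _ _).symm
        _ ≤ n*k := Nat.mul_le_mul (Nat.succ_le_of_lt ha) (le_refl k)
        _ = k*n := Nat.mul_comm n k⟩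
  else
    Sum.inr ⟨((x:ℕ)/(k+l))*l + ((x:ℕ)%(k+l) - k), by
      have hx := x.isLt
      have h0 : 0 < (k+l)*n := lt_of_le_of_lt (Nat.zero_le _) hx
      have hkl : 0 < k + l := Nat.pos_of_ne_zero (fun hz => by simp [hz] at h0)
      have ha : (x:ℕ)/(k+l) < n := Nat.div_lt_of_lt_mul hx
      have hr : (x:ℕ)%(k+l) < k + l := Nat.mod_lt _ hkl
      have hrl : (x:ℕ)%(k+l) - k < l := (tsub_lt_iff_left (not_lt.mp h)).mpr hr
      calc ((x:ℕ)/(k+l))*l + ((x:ℕ)%(k+l) - k) < ((x:ℕ)/(k+l))*l + l := Nat.add_lt_add_left hrl _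
        _ = ((x:ℕ)/(k+l) + 1)*l := (Nat.succ_mul _ _).symm
        _ ≤ n*l := Nat.mul_le_mul (Nat.succ_le_of_lt ha) (le_refl l)
        _ = l*n := Nat.mul_comm n l⟩

/-- The `n`-perfect shuffle `α ∗_n β` of `α ∈ NCP(kn)` and `β ∈ NCP(ln)`,
a partition of `[(k+l)n]`. -/
def shuffleKL (n k l : ℕ) (α : Setoid (Fin (k*n))) (β : Setoid (Fin (l*n))) :
    Setoid (Fin ((k+l)*n)) :=
  Setoid.comap (decodeKL n k l) (sumSetoid α β)

/-- The pair `(α, β) ∈ NCP(kn) × NCP(ln)` is `n`-admissible if the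
`n`-perfect shuffle `α ∗_n β` is noncrossing. -/
def AdmissibleKL (n k l : ℕ) (α : NCP (k*n)) (β : NCP (l*n)) : Prop :=
  IsNoncrossing (shuffleKL n k l α.1 β.1)

theorem decodeKL_inl_spec {n k l : ℕ} {x : Fin ((k+l)*n)} {p : Fin (k*n)}
    (h : decodeKL n k l x = Sum.inl p) :
    (x:ℕ) % (k+l) < k ∧ (p:ℕ) = (x:ℕ)/(k+l)*k + (x:ℕ)%(k+l) := by
  unfold decodeKL at h
  split at h
  · exact ⟨by assumption, by cases h; rfl⟩
  · exact absurd h (by simp)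

theorem decodeKL_inr_spec {n k l : ℕ} {x : Fin ((k+l)*n)} {p : Fin (l*n)}
    (h : decodeKL n k l x = Sum.inr p) :
    k ≤ (x:ℕ) % (k+l) ∧ (p:ℕ) = (x:ℕ)/(k+l)*l + ((x:ℕ)%(k+l) - k) := by
  unfold decodeKL at h
  split at h
  · exact absurd h (by simp)
  · exact ⟨le_of_not_gt (by assumption), by cases h; rfl⟩

theorem div_mod_lex {m x y : ℕ} (hxy : x < y) (heq : x / m = y / m) :
    x % m < y % m := by
  have hx2 := Nat.div_add_mod x m
  have hy2 := Nat.div_add_mod y m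
  rw [heq] at hx2
  have h3 : m * (y/m) + x % m < m * (y/m) + y % m := by rw [hx2, hy2]; exact hxy
  exact Nat.lt_of_add_lt_add_left h3

theorem pos_lt_inl {k l x y : ℕ} (hxy : x < y) (hx : x % (k+l) < k) :
    x/(k+l)*k + x%(k+l) < y/(k+l)*k + y%(k+l) := by
  have hq : x/(k+l) ≤ y/(k+l) := Nat.div_le_div_right hxy.le
  rcases lt_or_eq_of_le hq with h | h
  · calc x/(k+l)*k + x%(k+l) < x/(k+l)*k + k := Nat.add_lt_add_left hx _
      _ = (x/(k+l)+1)*k := (Nat.succ_mul _ _).symm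
      _ ≤ y/(k+l)*k := Nat.mul_le_mul_right k h
      _ ≤ y/(k+l)*k + y%(k+l) := Nat.le_add_right _ _
  · rw [h]
    exact Nat.add_lt_add_left (div_mod_lex hxy h) _

theorem pos_lt_inr {k l x y : ℕ} (hxy : x < y) (hx : k ≤ x % (k+l)) (hy : k ≤ y % (k+l)) :
    x/(k+l)*l + (x%(k+l) - k) < y/(k+l)*l + (y%(k+l) - k) := by
  have hq : x/(k+l) ≤ y/(k+l) := Nat.div_le_div_right hxy.le
  rcases lt_or_eq_of_le hq with h | h
  · have hm : 0 < k + l := by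
      rcases Nat.eq_zero_or_pos (k+l) with h0 | h0
      · rw [h0] at h; exact absurd h (by simp [Nat.div_zero])
      · exact h0
    have hr : x % (k+l) < k + l := Nat.mod_lt _ hm
    have hrl : x % (k+l) - k < l := (tsub_lt_iff_left hx).mpr hr
    calc x/(k+l)*l + (x%(k+l) - k) < x/(k+l)*l + l := Nat.add_lt_add_left hrl _
      _ = (x/(k+l)+1)*l := (Nat.succ_mul _ _).symm
      _ ≤ y/(k+l)*l := Nat.mul_le_mul_right l h
      _ ≤ y/(k+l)*l + (y%(k+l) - k) := Nat.le_add_right _ _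
  · rw [h]
    exact Nat.add_lt_add_left
      (Nat.sub_lt_sub_right hx (div_mod_lex hxy h)) _

theorem sumSetoid_mono {A B : Type*} {α α' : Setoid A} {β β' : Setoid B}
    (hα : α' ≤ α) (hβ : β' ≤ β) {x y : A ⊕ B}
    (h : sumSetoid α' β' x y) : sumSetoid α β x y := by
  cases x <;> cases y <;>
    first
      | exact hα h
      | exact hβ h
      | exact h.elim

theorem admissibleKL_mono {n k l : ℕ} {α α' : NCP (k*n)} {β β' : NCP (l*n)}
    (h : AdmissibleKL n k l α β) (hα : α' ≤ α) (hβ : β' ≤ β) :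
    AdmissibleKL n k l α' β' := by
  have hα' : α'.1 ≤ α.1 := hα
  have hβ' : β'.1 ≤ β.1 := hβ
  intro a b c d hab hbc hcd hac hbd
  have hac' : sumSetoid α'.1 β'.1 (decodeKL n k l a) (decodeKL n k l c) := hac
  have hbd' : sumSetoid α'.1 β'.1 (decodeKL n k l b) (decodeKL n k l d) := hbd
  have habπ : sumSetoid α.1 β.1 (decodeKL n k l a) (decodeKL n k l b) :=
    h a b c d hab hbc hcd (sumSetoid_mono hα' hβ' hac') (sumSetoid_mono hα' hβ' hbd')
  show sumSetoid α'.1 β'.1 (decodeKL n k l a) (decodeKL n k l b)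
  rcases ha : decodeKL n k l a with pa | pa <;>
    rcases hb : decodeKL n k l b with pb | pb <;>
      simp only [ha, hb] at habπ
  · -- both on the α side
    rcases hc : decodeKL n k l c with pc | pc
    · rcases hd : decodeKL n k l d with pd | pd
      · rw [ha, hc] at hac'
        rw [hb, hd] at hbd'
        obtain ⟨hma, hpa⟩ := decodeKL_inl_spec ha
        obtain ⟨hmb, hpb⟩ := decodeKL_inl_spec hb
        obtain ⟨hmc, hpc'⟩ := decodeKL_inl_spec hc
        obtain ⟨hmd, hpd'⟩ := decodeKL_inl_spec hd
        show α'.1 pa pb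
        exact α'.2 pa pb pc pd
          (by rw [Fin.lt_def, hpa, hpb]; exact pos_lt_inl hab hma)
          (by rw [Fin.lt_def, hpb, hpc']; exact pos_lt_inl hbc hmb)
          (by rw [Fin.lt_def, hpc', hpd']; exact pos_lt_inl hcd hmc)
          hac' hbd'
      · rw [hb, hd] at hbd'; exact hbd'.elim
    · rw [ha, hc] at hac'; exact hac'.elim
  · exact habπ.elim
  · exact habπ.elim
  · -- both on the β side
    rcases hc : decodeKL n k l c with pc | pc
    · rw [ha, hc] at hac'; exact hac'.elim
    · rcases hd : decodeKL n k l d with pd | pd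
      · rw [hb, hd] at hbd'; exact hbd'.elim
      · rw [ha, hc] at hac'
        rw [hb, hd] at hbd'
        obtain ⟨hma, hpa⟩ := decodeKL_inr_spec ha
        obtain ⟨hmb, hpb⟩ := decodeKL_inr_spec hb
        obtain ⟨hmc, hpc'⟩ := decodeKL_inr_spec hc
        obtain ⟨hmd, hpd'⟩ := decodeKL_inr_spec hd
        show β'.1 pa pb
        exact β'.2 pa pb pc pd
          (by rw [Fin.lt_def, hpa, hpb]; exact pos_lt_inr hab hma hmb)
          (by rw [Fin.lt_def, hpb, hpc']; exact pos_lt_inr hbc hmb hmc)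
          (by rw [Fin.lt_def, hpc', hpd']; exact pos_lt_inr hcd hmc hmd)
          hac' hbd'

/-- If `(α, β) ∈ NCP(kn) × NCP(ln)` is `n`-admissible and
`α' | α`, `β' | β`, then `(α', β')` is `n`-admissible; conversely if `(α, β)`
is not `n`-admissible and `α | α'`, `β | β'`, then `(α', β')` is not
`n`-admissible. -/
theorem admissible_of_refines (n k l : ℕ) (α α' : NCP (k*n)) (β β' : NCP (l*n)) :
    (AdmissibleKL n k l α β → α' ≤ α → β' ≤ β → AdmissibleKL n k l α' β') ∧
    (¬ AdmissibleKL n k l α β → α ≤ α' → β ≤ β' → ¬ AdmissibleKL n k l α' β') := by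
  constructor
  · intro h hα hβ
    exact admissibleKL_mono h hα hβ
  · intro hn hα hβ h'
    exact hn (admissibleKL_mono h' hα hβ)
end

section
/- For a fixed α ∈ NCP(n), the set of noncrossing partitions β ∈ NCP(n) such that (α, β) is n-admissible is stable under meets and joins, and forms a sublattice of the lattice (NCP(n), |). -/
open scoped BigOperators

section KK
variable {n : ℕ}

def Krel (α : Setoid (Fin n)) (x y : Fin n) : Prop :=
  ∀ p q : Fin n, α p q →
    ¬ ((p:ℕ) ≤ min (x:ℕ) (y:ℕ) ∧ min (x:ℕ) (y:ℕ) < (q:ℕ) ∧ (q:ℕ) ≤ max (x:ℕ) (y:ℕ) ∨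
       min (x:ℕ) (y:ℕ) < (p:ℕ) ∧ (p:ℕ) ≤ max (x:ℕ) (y:ℕ) ∧ max (x:ℕ) (y:ℕ) < (q:ℕ))

def KSetoid (α : Setoid (Fin n)) : Setoid (Fin n) where
  r := Krel α
  iseqv := by
    refine ⟨?_, ?_, ?_⟩
    · intro x p q h hc; omega
    · intro x y hxy p q h hc; have := hxy p q h; omega
    · intro x y z hxy hyz p q h hc
      have h1 := hxy p q h; have h2 := hyz p q h; omega

theorem KSetoid_isNoncrossing (α : Setoid (Fin n)) : IsNoncrossing (KSetoid α) := by
  intro a b c d hab hbc hcd hac hbd p q h hc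
  have h1 := hac p q h; have h2 := hbd p q h
  have e1 : (a:ℕ) < b := hab
  have e2 : (b:ℕ) < c := hbc
  have e3 : (c:ℕ) < d := hcd
  omega

def ev (p : Fin n) : Fin (2*n) := ⟨2*(p:ℕ), by have := p.isLt; omega⟩
def od (p : Fin n) : Fin (2*n) := ⟨2*(p:ℕ)+1, by have := p.isLt; omega⟩

lemma decode2_ev (p : Fin n) : decode2 n (ev p) = Sum.inl p := by
  unfold decode2 ev
  rw [if_pos (by simp [Nat.mul_mod_right])]
  congr 1
  exact Fin.ext (show (2*(p:ℕ))/2 = (p:ℕ) by omega)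

lemma decode2_od (p : Fin n) : decode2 n (od p) = Sum.inr p := by
  unfold decode2 od
  rw [if_neg (show ¬ ((2*(p:ℕ)+1) % 2 = 0) by omega)]
  congr 1
  exact Fin.ext (show (2*(p:ℕ)+1)/2 = (p:ℕ) by omega)

lemma shuffle_ev_ev {α β : Setoid (Fin n)} {p q : Fin n} :
    shuffle2 α β (ev p) (ev q) ↔ α p q := by
  rw [shuffle2, Setoid.comap_rel, decode2_ev, decode2_ev]
  exact Iff.rfl

lemma shuffle_od_od {α β : Setoid (Fin n)} {p q : Fin n} :
    shuffle2 α β (od p) (od q) ↔ β p q := by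
  rw [shuffle2, Setoid.comap_rel, decode2_od, decode2_od]
  exact Iff.rfl

lemma shuffle_not_ev_od {α β : Setoid (Fin n)} (p q : Fin n) :
    ¬ shuffle2 α β (ev p) (od q) := by
  rw [shuffle2, Setoid.comap_rel, decode2_ev, decode2_od]
  exact fun h => h

lemma shuffle_not_od_ev {α β : Setoid (Fin n)} (p q : Fin n) :
    ¬ shuffle2 α β (od p) (ev q) := by
  rw [shuffle2, Setoid.comap_rel, decode2_od, decode2_ev]
  exact fun h => h

lemma ev_or_od (x : Fin (2*n)) : (∃ p, x = ev p) ∨ (∃ p, x = od p) := by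
  rcases Nat.even_or_odd (x:ℕ) with ⟨k,hk⟩|⟨k,hk⟩
  · exact Or.inl ⟨⟨k, by have := x.isLt; omega⟩, Fin.ext (show (x:ℕ) = 2*k by omega)⟩
  · exact Or.inr ⟨⟨k, by have := x.isLt; omega⟩, Fin.ext (show (x:ℕ) = 2*k+1 by omega)⟩

end KK
section Dirs
variable {n : ℕ}

lemma krel_of_admissible {α β : NCP n} (h : Admissible2 α β) :
    ∀ x y, β.1 x y → Krel α.1 x y := by
  have key : ∀ r s p q : Fin n, β.1 r s → α.1 p q →
      ¬ (((p:ℕ) ≤ r ∧ (r:ℕ) < q ∧ (q:ℕ) ≤ s) ∨ ((r:ℕ) < p ∧ (p:ℕ) ≤ s ∧ (s:ℕ) < q)) := by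
    intro r s p q hβrs hαpq hc
    rcases hc with ⟨h1, h2, h3⟩ | ⟨h1, h2, h3⟩
    · exact shuffle_not_ev_od p r
        (h (ev p) (od r) (ev q) (od s)
          (show 2*(p:ℕ) < 2*(r:ℕ)+1 by omega)
          (show 2*(r:ℕ)+1 < 2*(q:ℕ) by omega)
          (show 2*(q:ℕ) < 2*(s:ℕ)+1 by omega)
          (shuffle_ev_ev.mpr hαpq) (shuffle_od_od.mpr hβrs))
    · exact shuffle_not_od_ev r p
        (h (od r) (ev p) (od s) (ev q)
          (show 2*(r:ℕ)+1 < 2*(p:ℕ) by omega)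
          (show 2*(p:ℕ) < 2*(s:ℕ)+1 by omega)
          (show 2*(s:ℕ)+1 < 2*(q:ℕ) by omega)
          (shuffle_od_od.mpr hβrs) (shuffle_ev_ev.mpr hαpq))
  intro x y hxy p q hpq hc
  rcases le_or_gt (x:ℕ) (y:ℕ) with hle | hlt
  · exact key x y p q hxy hpq (by omega)
  · exact key y x p q (β.1.symm' hxy) hpq (by omega)

lemma admissible_of_le_K (α : NCP n) (δ : Setoid (Fin n)) (hδ : IsNoncrossing δ)
    (hK : ∀ x y, δ x y → Krel α.1 x y) : IsNoncrossing (shuffle2 α.1 δ) := by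
  intro a b c d hab hbc hcd hac hbd
  rcases ev_or_od a with ⟨pa, rfl⟩ | ⟨pa, rfl⟩ <;>
  rcases ev_or_od b with ⟨pb, rfl⟩ | ⟨pb, rfl⟩ <;>
  rcases ev_or_od c with ⟨pc, rfl⟩ | ⟨pc, rfl⟩ <;>
  rcases ev_or_od d with ⟨pd, rfl⟩ | ⟨pd, rfl⟩ <;>
  [skip; skip; skip; skip; skip; skip; skip; skip;
   skip; skip; skip; skip; skip; skip; skip; skip] <;>
  first
    | exact absurd hac (shuffle_not_ev_od _ _)
    | exact absurd hac (shuffle_not_od_ev _ _)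
    | exact absurd hbd (shuffle_not_ev_od _ _)
    | exact absurd hbd (shuffle_not_od_ev _ _)
    | -- all even
      (have e1 : 2*(pa:ℕ) < 2*(pb:ℕ) := hab
       have e2 : 2*(pb:ℕ) < 2*(pc:ℕ) := hbc
       have e3 : 2*(pc:ℕ) < 2*(pd:ℕ) := hcd
       exact shuffle_ev_ev.mpr (α.2 pa pb pc pd (show (pa:ℕ) < pb by omega)
         (show (pb:ℕ) < pc by omega) (show (pc:ℕ) < pd by omega)
         (shuffle_ev_ev.mp hac) (shuffle_ev_ev.mp hbd)))
    | -- all odd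
      (have e1 : 2*(pa:ℕ)+1 < 2*(pb:ℕ)+1 := hab
       have e2 : 2*(pb:ℕ)+1 < 2*(pc:ℕ)+1 := hbc
       have e3 : 2*(pc:ℕ)+1 < 2*(pd:ℕ)+1 := hcd
       exact shuffle_od_od.mpr (hδ pa pb pc pd (show (pa:ℕ) < pb by omega)
         (show (pb:ℕ) < pc by omega) (show (pc:ℕ) < pd by omega)
         (shuffle_od_od.mp hac) (shuffle_od_od.mp hbd)))
    | -- a,c even; b,d odd
      (have e1 : 2*(pa:ℕ) < 2*(pb:ℕ)+1 := hab
       have e2 : 2*(pb:ℕ)+1 < 2*(pc:ℕ) := hbc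
       have e3 : 2*(pc:ℕ) < 2*(pd:ℕ)+1 := hcd
       exact ((hK pb pd (shuffle_od_od.mp hbd)) pa pc (shuffle_ev_ev.mp hac)
         (by omega)).elim)
    | -- a,c odd; b,d even
      (have e1 : 2*(pa:ℕ)+1 < 2*(pb:ℕ) := hab
       have e2 : 2*(pb:ℕ) < 2*(pc:ℕ)+1 := hbc
       have e3 : 2*(pc:ℕ)+1 < 2*(pd:ℕ) := hcd
       exact ((hK pa pc (shuffle_od_od.mp hac)) pb pd (shuffle_ev_ev.mp hbd)
         (by omega)).elim)

end Dirs
/-- For fixed `α ∈ NCP(n)`, the set of `β ∈ NCP(n)` such that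
`(α, β)` is `n`-admissible is stable under meets and joins: it forms a
sublattice of the lattice `(NCP(n), |)`. -/
theorem admissible_set_sublattice (n : ℕ) (α β γ : NCP n)
    (hβ : Admissible2 α β) (hγ : Admissible2 α γ) :
    Admissible2 α (β ⊓ γ) ∧ Admissible2 α (β ⊔ γ) := by
  have hβK := krel_of_admissible hβ
  have hγK := krel_of_admissible hγ
  constructor
  · exact admissible_of_le_K α (β.1 ⊓ γ.1) (inf_isNoncrossing β.2 γ.2)
      (fun x y hxy => hβK x y
        (by
          rw [show ((β.1 ⊓ γ.1 : Setoid (Fin n)) : Fin n → Fin n → Prop) = ⇑β.1 ⊓ ⇑γ.1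
            from Setoid.inf_def] at hxy
          exact hxy.1))
  · refine admissible_of_le_K α (ncSup β.1 γ.1) (ncSup_isNoncrossing _ _) ?_
    have hle : ncSup β.1 γ.1 ≤ KSetoid α.1 :=
      sInf_le ⟨KSetoid_isNoncrossing α.1,
        Setoid.le_def.mpr fun {x y} h => hβK x y h,
        Setoid.le_def.mpr fun {x y} h => hγK x y h⟩
    exact fun x y hxy => Setoid.le_def.mp hle hxy
end

section
/- The set NCP(n), equipped with the composition product ∘ defined on n-admissible pairs, is a partial monoid in the sense of Segal: for all α, β, γ ∈ NCP(n), (α ∘ β) ∘ γ is defined if and only if α ∘ (β ∘ γ) is defined, and in that case the two expressions are equal; moreover 0_n is a two-sided unit (every pair (α, 0_n) and (0_n, α) is admissible, with α ∘ 0_n = 0_n ∘ α = α). -/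
open scoped BigOperators

/-! ### Auxiliary development for Statement 8 -/

open Relation

section AuxNCP

variable {n : ℕ}

/-- Crossing-freeness of a pair of partitions (abstract form of admissibility). -/
def Adm (X Y : Setoid (Fin n)) : Prop :=
  (∀ i j k l : Fin n, i ≤ j → j < k → k ≤ l → X i k → Y j l → False) ∧
  (∀ i j k l : Fin n, j < i → i ≤ l → l < k → X i k → Y j l → False)

lemma setoid_le_iff {X Y : Setoid (Fin n)} : X ≤ Y ↔ ∀ x y, X x y → Y x y := by
  rw [Setoid.le_def]

lemma adm_mono_left {X X' Y : Setoid (Fin n)} (h : X ≤ X') (hA : Adm X' Y) : Adm X Y := by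
  rw [setoid_le_iff] at h
  exact ⟨fun i j k l h1 h2 h3 h4 h5 => hA.1 i j k l h1 h2 h3 (h _ _ h4) h5,
    fun i j k l h1 h2 h3 h4 h5 => hA.2 i j k l h1 h2 h3 (h _ _ h4) h5⟩

lemma adm_mono_right {X Y Y' : Setoid (Fin n)} (h : Y ≤ Y') (hA : Adm X Y') : Adm X Y := by
  rw [setoid_le_iff] at h
  exact ⟨fun i j k l h1 h2 h3 h4 h5 => hA.1 i j k l h1 h2 h3 h4 (h _ _ h5),
    fun i j k l h1 h2 h3 h4 h5 => hA.2 i j k l h1 h2 h3 h4 (h _ _ h5)⟩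

lemma sup_rel {X Y : Setoid (Fin n)} {x y : Fin n} :
    (X ⊔ Y) x y ↔ EqvGen (fun a b => X a b ∨ Y a b) x y := by
  rw [Setoid.sup_eq_eqvGen]; exact Iff.rfl

lemma sup_barrier {X Y : Setoid (Fin n)} {P : Fin n → Prop}
    (hX : ∀ u v, X u v → (P u ↔ P v)) (hY : ∀ u v, Y u v → (P u ↔ P v))
    {x y : Fin n} (h : (X ⊔ Y) x y) : P x ↔ P y := by
  have h' := sup_rel.1 h
  clear h
  induction h' with
  | rel a b h =>
    rcases h with h | h
    · exact hX _ _ h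
    · exact hY _ _ h
  | refl a => exact Iff.rfl
  | symm a b _ ih => exact ih.symm
  | trans a b c _ _ ih1 ih2 => exact ih1.trans ih2

/-- Steps of `Y` cannot cross a pair of `X` (barrier on the `X`-side). -/
lemma adm_barrier_left {X Y : Setoid (Fin n)} (h : Adm X Y) {i k : Fin n}
    (hik : X i k) (hlt : i < k) :
    ∀ u v, Y u v → ((i ≤ u ∧ u < k) ↔ (i ≤ v ∧ v < k)) := by
  have aux : ∀ u v, Y u v → u < v → ((i ≤ u ∧ u < k) ↔ (i ≤ v ∧ v < k)) := by
    intro u v huv huvlt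
    constructor
    · rintro ⟨h1, h2⟩
      refine ⟨h1.trans huvlt.le, ?_⟩
      by_contra hvk
      exact h.1 i u k v h1 h2 (not_lt.1 hvk) hik huv
    · rintro ⟨h1, h2⟩
      refine ⟨?_, huvlt.trans h2⟩
      by_contra hiu
      exact h.2 i u k v (not_le.1 hiu) h1 h2 hik huv
  intro u v huv
  rcases lt_trichotomy u v with hl | rfl | hl
  · exact aux u v huv hl
  · exact Iff.rfl
  · exact (aux v u (Y.symm' huv) hl).symm

/-- Steps of `X` cannot cross a pair of `Y` (barrier on the `Y`-side). -/
lemma adm_barrier_right {X Y : Setoid (Fin n)} (h : Adm X Y) {j l : Fin n}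
    (hjl : Y j l) (hlt : j < l) :
    ∀ u v, X u v → ((j < u ∧ u ≤ l) ↔ (j < v ∧ v ≤ l)) := by
  have aux : ∀ u v, X u v → u < v → ((j < u ∧ u ≤ l) ↔ (j < v ∧ v ≤ l)) := by
    intro u v huv huvlt
    constructor
    · rintro ⟨h1, h2⟩
      refine ⟨h1.trans huvlt, ?_⟩
      by_contra hvl
      exact h.2 u j v l h1 h2 (not_le.1 hvl) huv hjl
    · rintro ⟨h1, h2⟩
      refine ⟨?_, huvlt.le.trans h2⟩
      by_contra hju
      exact h.1 u j v l (not_lt.1 hju) h1 h2 huv hjl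
  intro u v huv
  rcases lt_trichotomy u v with hl | rfl | hl
  · exact aux u v huv hl
  · exact Iff.rfl
  · exact (aux v u (X.symm' huv) hl).symm

/-- The key combinatorial equivalence behind Segal associativity. -/
lemma adm_assoc {A B C : Setoid (Fin n)} :
    (Adm A B ∧ Adm (A ⊔ B) C) ↔ (Adm B C ∧ Adm A (B ⊔ C)) := by
  constructor
  · rintro ⟨h1, h2⟩
    have hAC : Adm A C := adm_mono_left le_sup_left h2
    have hBC : Adm B C := adm_mono_left le_sup_right h2
    refine ⟨hBC, ?_, ?_⟩
    · intro i j k l hij hjk hkl hik hjl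
      have hlt : i < k := lt_of_le_of_lt hij hjk
      have hbar := sup_barrier (adm_barrier_left h1 hik hlt)
        (adm_barrier_left hAC hik hlt) hjl
      exact absurd (hbar.1 ⟨hij, hjk⟩).2 (not_lt.2 hkl)
    · intro i j k l hji hil hlk hik hjl
      have hlt : i < k := lt_of_le_of_lt hil hlk
      have hbar := sup_barrier (adm_barrier_left h1 hik hlt)
        (adm_barrier_left hAC hik hlt) hjl
      exact absurd (hbar.2 ⟨hil, hlk⟩).1 (not_le.2 hji)
  · rintro ⟨h1, h2⟩
    have hAB : Adm A B := adm_mono_right le_sup_left h2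
    have hAC : Adm A C := adm_mono_right le_sup_right h2
    refine ⟨hAB, ?_, ?_⟩
    · intro i j k l hij hjk hkl hik hjl
      have hlt : j < l := hjk.trans_le hkl
      have hbar := sup_barrier (adm_barrier_right hAC hjl hlt)
        (adm_barrier_right h1 hjl hlt) hik
      exact absurd (hbar.2 ⟨hjk, hkl⟩).1 (not_lt.2 hij)
    · intro i j k l hji hil hlk hik hjl
      have hlt : j < l := hji.trans_le hil
      have hbar := sup_barrier (adm_barrier_right hAC hjl hlt)
        (adm_barrier_right h1 hjl hlt) hik
      exact absurd (hbar.1 ⟨hji, hil⟩).2 (not_le.2 hlk)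

section Straddle

variable {A B : Setoid (Fin n)}

lemma step_sup {u v : Fin n} (h : A u v ∨ B u v) : (A ⊔ B) u v :=
  sup_rel.2 (EqvGen.rel _ _ h)

/-- If a class connects two sides of a point `t` not in the class, then some single
step of the class strictly straddles `t`. -/
lemma sup_straddle {x y : Fin n} (h : (A ⊔ B) x y) :
    ∀ t : Fin n, ¬ (A ⊔ B) x t → ((x < t ∧ t < y) ∨ (y < t ∧ t < x)) →
      ∃ m m' : Fin n, (A m m' ∨ B m m') ∧ m < t ∧ t < m' ∧ (A ⊔ B) x m := by
  have h' := sup_rel.1 h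
  clear h
  induction h' with
  | rel a b hab =>
    intro t _ hbet
    rcases hbet with ⟨h1, h2⟩ | ⟨h1, h2⟩
    · exact ⟨a, b, hab, h1, h2, (A ⊔ B).refl' a⟩
    · refine ⟨b, a, ?_, h1, h2, step_sup hab⟩
      rcases hab with h | h
      · exact Or.inl (A.symm' h)
      · exact Or.inr (B.symm' h)
  | refl a =>
    intro t _ hbet
    rcases hbet with ⟨h1, h2⟩ | ⟨h1, h2⟩ <;> exact absurd (h1.trans h2) (lt_irrefl _)
  | symm a b hab ih =>
    intro t hbt hbet
    have hab' : (A ⊔ B) a b := sup_rel.2 hab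
    have hat : ¬ (A ⊔ B) a t := fun h' => hbt ((A ⊔ B).trans' ((A ⊔ B).symm' hab') h')
    obtain ⟨m, m', hs, hb1, hb2, hm⟩ := ih t hat (Or.symm hbet)
    exact ⟨m, m', hs, hb1, hb2, (A ⊔ B).trans' ((A ⊔ B).symm' hab') hm⟩
  | trans a b c hab hbc ih1 ih2 =>
    intro t hat hbet
    have hab' : (A ⊔ B) a b := sup_rel.2 hab
    by_cases hty : t = b
    · exact absurd (hty ▸ hab') hat
    · by_cases h1 : (a < t ∧ t < b) ∨ (b < t ∧ t < a)
      · exact ih1 t hat h1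
      · have hbt : ¬ (A ⊔ B) b t := fun h' => hat ((A ⊔ B).trans' hab' h')
        have h2 : (b < t ∧ t < c) ∨ (c < t ∧ t < b) := by
          have e1 : (t : ℕ) ≠ (b : ℕ) := fun hh => hty (Fin.ext hh)
          simp only [Fin.lt_def, not_or, not_and, not_lt] at h1 hbet ⊢
          omega
        obtain ⟨m, m', hs, hb1, hb2, hm⟩ := ih2 t hbt h2
        exact ⟨m, m', hs, hb1, hb2, (A ⊔ B).trans' hab' hm⟩

/-- A single step of a class disjoint from `w`'s class cannot cross the step `(w, w')`. -/
lemma step_pres (hA : IsNoncrossing A) (hB : IsNoncrossing B) (hAdm : Adm A B)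
    {w w' u v : Fin n} (hww : A w w' ∨ B w w') (hw : w < w')
    (hu : ¬ (A ⊔ B) u w) (huv : A u v ∨ B u v) :
    (w < u ∧ u < w') ↔ (w < v ∧ v < w') := by
  have key : ∀ u v : Fin n, ¬ (A ⊔ B) u w → (A u v ∨ B u v) → u < v →
      (w < u ∧ u < w') → (w < v ∧ v < w') := by
    rintro u v hu huv hlt ⟨p1, p2⟩
    refine ⟨p1.trans hlt, ?_⟩
    rcases lt_trichotomy v w' with h | rfl | h
    · exact h
    · exact absurd ((A ⊔ B).trans' (step_sup huv) ((A ⊔ B).symm' (step_sup hww))) hu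
    · exfalso
      rcases huv with huv | huv <;> rcases hww with hww | hww
      · exact hu (step_sup (Or.inl (A.symm' (hA w u w' v p1 p2 h hww huv))))
      · exact hAdm.2 u w v w' p1 p2.le h huv hww
      · exact hAdm.1 w u w' v p1.le p2 h.le hww huv
      · exact hu (step_sup (Or.inr (B.symm' (hB w u w' v p1 p2 h hww huv))))
  have key2 : ∀ u v : Fin n, ¬ (A ⊔ B) u w → (A u v ∨ B u v) → u < v →
      (w < v ∧ v < w') → (w < u ∧ u < w') := by
    rintro u v hu huv hlt ⟨p1, p2⟩
    refine ⟨?_, hlt.trans p2⟩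
    rcases lt_trichotomy w u with h | rfl | h
    · exact h
    · exact absurd ((A ⊔ B).refl' _) hu
    · exfalso
      rcases huv with huv | huv <;> rcases hww with hww | hww
      · exact hu (step_sup (Or.inl (hA u w v w' h p1 p2 huv hww)))
      · exact hAdm.1 u w v w' h.le p1 p2.le huv hww
      · exact hAdm.2 w u w' v h p1.le p2 hww huv
      · exact hu (step_sup (Or.inr (hB u w v w' h p1 p2 huv hww)))
  have hv : ¬ (A ⊔ B) v w := fun h' =>
    hu ((A ⊔ B).trans' (step_sup huv) h')
  have huv' : A v u ∨ B v u := by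
    rcases huv with h | h
    · exact Or.inl (A.symm' h)
    · exact Or.inr (B.symm' h)
  rcases lt_trichotomy u v with hl | rfl | hl
  · exact ⟨key u v hu huv hl, key2 u v hu huv hl⟩
  · exact Iff.rfl
  · exact ⟨key2 v u hv huv' hl, key v u hv huv' hl⟩

/-- Any class disjoint from the class of the step `(w, w')` lies entirely inside
or entirely outside the open interval `(w, w')`. -/
lemma class_pres (hA : IsNoncrossing A) (hB : IsNoncrossing B) (hAdm : Adm A B)
    {w w' : Fin n} (hww : A w w' ∨ B w w') (hw : w < w') :
    ∀ x y : Fin n, (A ⊔ B) x y → ¬ (A ⊔ B) x w →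
      ((w < x ∧ x < w') ↔ (w < y ∧ y < w')) := by
  intro x y h
  have h' := sup_rel.1 h
  clear h
  induction h' with
  | rel a b hab => intro haw; exact step_pres hA hB hAdm hww hw haw hab
  | refl a => intro _; exact Iff.rfl
  | symm a b hab ih =>
    intro hbw
    have hab' : (A ⊔ B) a b := sup_rel.2 hab
    have haw : ¬ (A ⊔ B) a w := fun h' => hbw ((A ⊔ B).trans' ((A ⊔ B).symm' hab') h')
    exact (ih haw).symm
  | trans a b c hab hbc ih1 ih2 =>
    intro haw
    have hab' : (A ⊔ B) a b := sup_rel.2 hab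
    have hbw : ¬ (A ⊔ B) b w := fun h' => haw ((A ⊔ B).trans' hab' h')
    exact (ih1 haw).trans (ih2 hbw)

/-- The join of a crossing-free pair of noncrossing partitions is noncrossing. -/
theorem isNoncrossing_sup (hA : IsNoncrossing A) (hB : IsNoncrossing B) (hAdm : Adm A B) :
    IsNoncrossing (A ⊔ B) := by
  intro a b c d hab hbc hcd hac hbd
  by_contra hnab
  have hnbc : ¬ (A ⊔ B) b c := fun h => hnab ((A ⊔ B).trans' hac ((A ⊔ B).symm' h))
  obtain ⟨m, m', hs1, hm1, hm2, ham⟩ := sup_straddle hac b hnab (Or.inl ⟨hab, hbc⟩)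
  obtain ⟨q, q', hs2, hq1, hq2, hbq⟩ := sup_straddle hbd c hnbc (Or.inl ⟨hbc, hcd⟩)
  have hnbm : ¬ (A ⊔ B) b m := fun h => hnab ((A ⊔ B).trans' ham ((A ⊔ B).symm' h))
  have hw1 : m < m' := hm1.trans hm2
  have hqin : m < q ∧ q < m' :=
    (class_pres hA hB hAdm hs1 hw1 b q hbq hnbm).1 ⟨hm1, hm2⟩
  have hw2 : q < q' := hq1.trans hq2
  have hmc : (A ⊔ B) m c := (A ⊔ B).trans' ((A ⊔ B).symm' ham) hac
  have hnmq : ¬ (A ⊔ B) m q := fun h =>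
    hnab ((A ⊔ B).trans' ham ((A ⊔ B).trans' h ((A ⊔ B).symm' hbq)))
  have hcontra : q < m ∧ m < q' :=
    (class_pres hA hB hAdm hs2 hw2 m c hmc hnmq).2 ⟨hq1, hq2⟩
  exact absurd hcontra.1 (lt_asymm hqin.1)

end Straddle

end AuxNCP

section CompAux

variable {n : ℕ}

/-- Even position embedding `Fin n → Fin (2n)`. -/
def evp (i : Fin n) : Fin (2*n) := ⟨2*(i:ℕ), by have := i.isLt; omega⟩

/-- Odd position embedding `Fin n → Fin (2n)`. -/
def odp (i : Fin n) : Fin (2*n) := ⟨2*(i:ℕ)+1, by have := i.isLt; omega⟩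

lemma decode2_evp (i : Fin n) : decode2 n (evp i) = Sum.inl i := by
  have h0 : ((evp i : Fin (2*n)) : ℕ) % 2 = 0 := by show (2*(i:ℕ)) % 2 = 0; omega
  unfold decode2
  rw [if_pos h0]
  congr 1
  exact Fin.ext (by show (2*(i:ℕ))/2 = (i:ℕ); omega)

lemma decode2_odp (i : Fin n) : decode2 n (odp i) = Sum.inr i := by
  have h0 : ¬ ((odp i : Fin (2*n)) : ℕ) % 2 = 0 := by show ¬ (2*(i:ℕ)+1) % 2 = 0; omega
  unfold decode2
  rw [if_neg h0]
  congr 1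
  exact Fin.ext (by show (2*(i:ℕ)+1)/2 = (i:ℕ); omega)

lemma sum_rel_ll {X Y : Setoid (Fin n)} {a b : Fin n} :
    sumSetoid X Y (Sum.inl a) (Sum.inl b) ↔ X a b := by
  constructor
  · intro h; exact h
  · intro h; exact h

lemma sum_rel_rr {X Y : Setoid (Fin n)} {a b : Fin n} :
    sumSetoid X Y (Sum.inr a) (Sum.inr b) ↔ Y a b := by
  constructor
  · intro h; exact h
  · intro h; exact h

lemma sum_rel_lr {X Y : Setoid (Fin n)} {a b : Fin n} :
    ¬ sumSetoid X Y (Sum.inl a) (Sum.inr b) := fun h => h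

lemma sum_rel_rl {X Y : Setoid (Fin n)} {a b : Fin n} :
    ¬ sumSetoid X Y (Sum.inr a) (Sum.inl b) := fun h => h

lemma shuffle2_evp {X Y : Setoid (Fin n)} (i j : Fin n) :
    shuffle2 X Y (evp i) (evp j) ↔ X i j := by
  show sumSetoid X Y (decode2 n (evp i)) (decode2 n (evp j)) ↔ X i j
  rw [decode2_evp, decode2_evp]
  exact sum_rel_ll

lemma shuffle2_odp {X Y : Setoid (Fin n)} (i j : Fin n) :
    shuffle2 X Y (odp i) (odp j) ↔ Y i j := by
  show sumSetoid X Y (decode2 n (odp i)) (decode2 n (odp j)) ↔ Y i j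
  rw [decode2_odp, decode2_odp]
  exact sum_rel_rr

lemma shuffle2_evp_odp {X Y : Setoid (Fin n)} (i j : Fin n) :
    ¬ shuffle2 X Y (evp i) (odp j) := by
  show ¬ sumSetoid X Y (decode2 n (evp i)) (decode2 n (odp j))
  rw [decode2_evp, decode2_odp]
  exact sum_rel_lr

lemma shuffle2_odp_evp {X Y : Setoid (Fin n)} (i j : Fin n) :
    ¬ shuffle2 X Y (odp i) (evp j) := by
  show ¬ sumSetoid X Y (decode2 n (odp i)) (decode2 n (evp j))
  rw [decode2_odp, decode2_evp]
  exact sum_rel_rl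

lemma shuffle2_rel {X Y : Setoid (Fin n)} {x y : Fin (2*n)} :
    shuffle2 X Y x y ↔
      ((x:ℕ) % 2 = 0 ∧ (y:ℕ) % 2 = 0 ∧
        X ⟨(x:ℕ)/2, by have := x.isLt; omega⟩ ⟨(y:ℕ)/2, by have := y.isLt; omega⟩) ∨
      ((x:ℕ) % 2 = 1 ∧ (y:ℕ) % 2 = 1 ∧
        Y ⟨(x:ℕ)/2, by have := x.isLt; omega⟩ ⟨(y:ℕ)/2, by have := y.isLt; omega⟩) := by
  show sumSetoid X Y (decode2 n x) (decode2 n y) ↔ _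
  unfold decode2
  rcases Nat.mod_two_eq_zero_or_one (x:ℕ) with hx | hx <;>
    rcases Nat.mod_two_eq_zero_or_one (y:ℕ) with hy | hy
  · rw [if_pos hx, if_pos hy]
    constructor
    · intro h; exact Or.inl ⟨hx, hy, h⟩
    · rintro (⟨_, _, h⟩ | ⟨h1, _, _⟩)
      · exact h
      · omega
  · rw [if_pos hx, if_neg (show ¬ (y:ℕ) % 2 = 0 by omega)]
    constructor
    · intro h; exact absurd h sum_rel_lr
    · rintro (⟨_, h, _⟩ | ⟨h, _, _⟩) <;> omega
  · rw [if_neg (show ¬ (x:ℕ) % 2 = 0 by omega), if_pos hy]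
    constructor
    · intro h; exact absurd h sum_rel_rl
    · rintro (⟨h, _, _⟩ | ⟨_, h, _⟩) <;> omega
  · rw [if_neg (show ¬ (x:ℕ) % 2 = 0 by omega), if_neg (show ¬ (y:ℕ) % 2 = 0 by omega)]
    constructor
    · intro h; exact Or.inr ⟨hx, hy, h⟩
    · rintro (⟨h, _, _⟩ | ⟨_, _, h⟩)
      · omega
      · exact h

lemma evp_lt_odp {i j : Fin n} (h : i ≤ j) : evp i < odp j :=
  Fin.mk_lt_mk.2 (by have := Fin.le_def.1 h; omega)

lemma odp_lt_evp {i j : Fin n} (h : i < j) : odp i < evp j :=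
  Fin.mk_lt_mk.2 (by have := Fin.lt_def.1 h; omega)

/-- Noncrossingness of the shuffle is exactly the combinatorial condition `Adm`. -/
theorem shuffle_nc_iff {X Y : Setoid (Fin n)} (hX : IsNoncrossing X) (hY : IsNoncrossing Y) :
    IsNoncrossing (shuffle2 X Y) ↔ Adm X Y := by
  constructor
  · intro hS
    constructor
    · intro i j k l hij hjk hkl hik hjl
      exact shuffle2_evp_odp i j (hS (evp i) (odp j) (evp k) (odp l)
        (evp_lt_odp hij) (odp_lt_evp hjk) (evp_lt_odp hkl)
        ((shuffle2_evp i k).2 hik) ((shuffle2_odp j l).2 hjl))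
    · intro i j k l hji hil hlk hik hjl
      exact shuffle2_odp_evp j i (hS (odp j) (evp i) (odp l) (evp k)
        (odp_lt_evp hji) (evp_lt_odp hil) (odp_lt_evp hlk)
        ((shuffle2_odp j l).2 hjl) ((shuffle2_evp i k).2 hik))
  · intro hAdm a b c d hab hbc hcd hac hbd
    have hab' := Fin.lt_def.1 hab
    have hbc' := Fin.lt_def.1 hbc
    have hcd' := Fin.lt_def.1 hcd
    rw [shuffle2_rel] at hac hbd ⊢
    rcases hac with ⟨ha, hc, hXac⟩ | ⟨ha, hc, hYac⟩ <;>
      rcases hbd with ⟨hb, hd, hXbd⟩ | ⟨hb, hd, hYbd⟩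
    · refine Or.inl ⟨ha, hb, ?_⟩
      exact hX _ _ _ _ (Fin.mk_lt_mk.2 (by omega)) (Fin.mk_lt_mk.2 (by omega))
        (Fin.mk_lt_mk.2 (by omega)) hXac hXbd
    · exact absurd hXac (fun hXac => hAdm.1 _ _ _ _ (Fin.mk_le_mk.2 (by omega))
        (Fin.mk_lt_mk.2 (by omega)) (Fin.mk_le_mk.2 (by omega)) hXac hYbd)
    · exact absurd hYac (fun hYac => hAdm.2 _ _ _ _ (Fin.mk_lt_mk.2 (by omega))
        (Fin.mk_le_mk.2 (by omega)) (Fin.mk_lt_mk.2 (by omega)) hXbd hYac)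
    · refine Or.inr ⟨ha, hb, ?_⟩
      exact hY _ _ _ _ (Fin.mk_lt_mk.2 (by omega)) (Fin.mk_lt_mk.2 (by omega))
        (Fin.mk_lt_mk.2 (by omega)) hYac hYbd

lemma powSetoid_rel {π : Setoid (Fin n)} {x y : Fin (2*n)} :
    powSetoid 2 π x y ↔
      π ⟨(x:ℕ)/2, by have := x.isLt; omega⟩ ⟨(y:ℕ)/2, by have := y.isLt; omega⟩ :=
  Iff.rfl

lemma powSetoid_evp {π : Setoid (Fin n)} (i j : Fin n) :
    powSetoid 2 π (evp i) (evp j) ↔ π i j := by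
  rw [powSetoid_rel]
  have e1 : (⟨((evp i : Fin (2*n)) : ℕ)/2, by have := (evp i).isLt; omega⟩ : Fin n) = i :=
    Fin.ext (by show (2*(i:ℕ))/2 = (i:ℕ); omega)
  have e2 : (⟨((evp j : Fin (2*n)) : ℕ)/2, by have := (evp j).isLt; omega⟩ : Fin n) = j :=
    Fin.ext (by show (2*(j:ℕ))/2 = (j:ℕ); omega)
  rw [e1, e2]

lemma interval_rel {x y : Fin (2*n)} :
    intervalSetoid 2 n x y ↔ (x:ℕ)/2 = (y:ℕ)/2 := Iff.rfl

lemma interval_evp_odp (i : Fin n) : intervalSetoid 2 n (evp i) (odp i) := by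
  rw [interval_rel]
  show (2*(i:ℕ))/2 = (2*(i:ℕ)+1)/2
  omega

lemma npow_two_inj {σ τ : NCP n} (h : powSetoid 2 σ.1 = powSetoid 2 τ.1) : σ = τ := by
  apply Subtype.ext
  apply Setoid.ext
  intro i j
  have h2 : powSetoid 2 σ.1 (evp i) (evp j) ↔ powSetoid 2 τ.1 (evp i) (evp j) := by rw [h]
  rwa [powSetoid_evp, powSetoid_evp] at h2

lemma nroot_two_npow (σ : NCP n) : nroot 2 n (powSetoid 2 σ.1) = σ := by
  have hex : ∃ τ : NCP n, (npow 2 τ).1 = powSetoid 2 σ.1 := ⟨σ, rfl⟩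
  unfold nroot
  rw [dif_pos hex]
  exact npow_two_inj hex.choose_spec

lemma ncSup_shuffle_eq {α β : NCP n} (h : Admissible2 α β) :
    ncSup (shuffle2 α.1 β.1) (intervalSetoid 2 n) = powSetoid 2 (α.1 ⊔ β.1) := by
  have hAdm : Adm α.1 β.1 := (shuffle_nc_iff α.2 β.2).1 h
  have hncJ : IsNoncrossing (α.1 ⊔ β.1) := isNoncrossing_sup α.2 β.2 hAdm
  apply le_antisymm
  · apply sInf_le
    refine ⟨powSetoid_isNoncrossing 2 ⟨α.1 ⊔ β.1, hncJ⟩, ?_, ?_⟩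
    · rw [setoid_le_iff]
      intro x y hxy
      rw [shuffle2_rel] at hxy
      rw [powSetoid_rel]
      rcases hxy with ⟨_, _, hh⟩ | ⟨_, _, hh⟩
      · exact setoid_le_iff.1 le_sup_left _ _ hh
      · exact setoid_le_iff.1 le_sup_right _ _ hh
    · rw [setoid_le_iff]
      intro x y hxy
      rw [powSetoid_rel]
      have hxy' : (x:ℕ)/2 = (y:ℕ)/2 := hxy
      have e : (⟨(x:ℕ)/2, by have := x.isLt; omega⟩ : Fin n) =
          ⟨(y:ℕ)/2, by have := y.isLt; omega⟩ := Fin.ext hxy'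
      rw [e]
  · apply le_sInf
    rintro γ ⟨hγnc, hγS, hγI⟩
    rw [setoid_le_iff]
    have key : ∀ i j : Fin n, (α.1 ⊔ β.1) i j → γ (evp i) (evp j) := by
      intro i j hij
      have h' := sup_rel.1 hij
      clear hij
      induction h' with
      | rel a b hab =>
        rcases hab with hab | hab
        · exact setoid_le_iff.1 hγS _ _ ((shuffle2_evp a b).2 hab)
        · have h1 : γ (odp a) (odp b) := setoid_le_iff.1 hγS _ _ ((shuffle2_odp a b).2 hab)
          have h2 : γ (evp a) (odp a) := setoid_le_iff.1 hγI _ _ (interval_evp_odp a)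
          have h3 : γ (evp b) (odp b) := setoid_le_iff.1 hγI _ _ (interval_evp_odp b)
          exact γ.trans' h2 (γ.trans' h1 (γ.symm' h3))
      | refl a => exact γ.refl' _
      | symm a b _ ih => exact γ.symm' ih
      | trans a b c _ _ ih1 ih2 => exact γ.trans' ih1 ih2
    intro x y hxy
    rw [powSetoid_rel] at hxy
    set i : Fin n := ⟨(x:ℕ)/2, by have := x.isLt; omega⟩ with hi
    set j : Fin n := ⟨(y:ℕ)/2, by have := y.isLt; omega⟩ with hj
    have h1 : γ x (evp i) := setoid_le_iff.1 hγI _ _ (by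
      rw [interval_rel]
      show (x:ℕ)/2 = (2*((x:ℕ)/2))/2
      omega)
    have h2 : γ y (evp j) := setoid_le_iff.1 hγI _ _ (by
      rw [interval_rel]
      show (y:ℕ)/2 = (2*((y:ℕ)/2))/2
      omega)
    exact γ.trans' h1 (γ.trans' (key i j hxy) (γ.symm' h2))

/-- Under admissibility, the composition product is the join in the partition lattice. -/
lemma comp_fst {α β : NCP n} (h : Admissible2 α β) : (comp α β).1 = α.1 ⊔ β.1 := by
  have hAdm : Adm α.1 β.1 := (shuffle_nc_iff α.2 β.2).1 h
  have hncJ : IsNoncrossing (α.1 ⊔ β.1) := isNoncrossing_sup α.2 β.2 hAdm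
  have e : comp α β = ⟨α.1 ⊔ β.1, hncJ⟩ := by
    unfold comp
    rw [ncSup_shuffle_eq h]
    exact nroot_two_npow ⟨α.1 ⊔ β.1, hncJ⟩
  rw [e]

lemma bot_rel_iff {x y : Fin n} : (⊥ : Setoid (Fin n)) x y ↔ x = y := by
  rw [show ((⊥ : Setoid (Fin n)) : Fin n → Fin n → Prop) = (· = ·) from Setoid.bot_def]

lemma adm_bot_right (X : Setoid (Fin n)) : Adm X ⊥ := by
  constructor
  · intro i j k l _ h2 h3 _ hjl
    obtain rfl : j = l := bot_rel_iff.1 hjl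
    exact absurd (h2.trans_le h3) (lt_irrefl j)
  · intro i j k l h1 h2 _ _ hjl
    obtain rfl : j = l := bot_rel_iff.1 hjl
    exact absurd (h1.trans_le h2) (lt_irrefl j)

lemma adm_bot_left (X : Setoid (Fin n)) : Adm ⊥ X := by
  constructor
  · intro i j k l h1 h2 _ hik _
    obtain rfl : i = k := bot_rel_iff.1 hik
    exact absurd (h1.trans_lt h2) (lt_irrefl i)
  · intro i j k l _ h2 h3 hik _
    obtain rfl : i = k := bot_rel_iff.1 hik
    exact absurd (h2.trans_lt h3) (lt_irrefl i)

end CompAux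

/-- **Statement 8.** `(NCP(n), ∘)` is a partial monoid in the sense of Segal:
`(α ∘ β) ∘ γ` is defined iff `α ∘ (β ∘ γ)` is defined, in which case the two
agree; and `0_n = ⊥` is a two-sided unit. -/
theorem ncp_partial_monoid (n : ℕ) :
    (∀ α β γ : NCP n,
      ((Admissible2 α β ∧ Admissible2 (comp α β) γ) ↔
        (Admissible2 β γ ∧ Admissible2 α (comp β γ))) ∧
      (Admissible2 α β ∧ Admissible2 (comp α β) γ →
        comp (comp α β) γ = comp α (comp β γ))) ∧
    (∀ α : NCP n,
      Admissible2 α ⊥ ∧ Admissible2 ⊥ α ∧ comp α ⊥ = α ∧ comp ⊥ α = α) := by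
  constructor
  · intro α β γ
    have fwd : Admissible2 α β ∧ Admissible2 (comp α β) γ →
        Admissible2 β γ ∧ Admissible2 α (comp β γ) := by
      rintro ⟨h1, h2⟩
      have hAdm1 : Adm α.1 β.1 := (shuffle_nc_iff α.2 β.2).1 h1
      have hnc1 : IsNoncrossing (α.1 ⊔ β.1) := isNoncrossing_sup α.2 β.2 hAdm1
      have h2' : IsNoncrossing (shuffle2 (comp α β).1 γ.1) := h2
      rw [comp_fst h1] at h2'
      have hAdm2 : Adm (α.1 ⊔ β.1) γ.1 := (shuffle_nc_iff hnc1 γ.2).1 h2'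
      obtain ⟨hBC, hABC⟩ := adm_assoc.1 ⟨hAdm1, hAdm2⟩
      have hb : Admissible2 β γ := (shuffle_nc_iff β.2 γ.2).2 hBC
      refine ⟨hb, ?_⟩
      show IsNoncrossing (shuffle2 α.1 (comp β γ).1)
      rw [comp_fst hb]
      exact (shuffle_nc_iff α.2 (isNoncrossing_sup β.2 γ.2 hBC)).2 hABC
    have bwd : Admissible2 β γ ∧ Admissible2 α (comp β γ) →
        Admissible2 α β ∧ Admissible2 (comp α β) γ := by
      rintro ⟨h1, h2⟩
      have hAdm1 : Adm β.1 γ.1 := (shuffle_nc_iff β.2 γ.2).1 h1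
      have hnc1 : IsNoncrossing (β.1 ⊔ γ.1) := isNoncrossing_sup β.2 γ.2 hAdm1
      have h2' : IsNoncrossing (shuffle2 α.1 (comp β γ).1) := h2
      rw [comp_fst h1] at h2'
      have hAdm2 : Adm α.1 (β.1 ⊔ γ.1) := (shuffle_nc_iff α.2 hnc1).1 h2'
      obtain ⟨hAB, hABC⟩ := adm_assoc.2 ⟨hAdm1, hAdm2⟩
      have ha : Admissible2 α β := (shuffle_nc_iff α.2 β.2).2 hAB
      refine ⟨ha, ?_⟩
      show IsNoncrossing (shuffle2 (comp α β).1 γ.1)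
      rw [comp_fst ha]
      exact (shuffle_nc_iff (isNoncrossing_sup α.2 β.2 hAB) γ.2).2 hABC
    refine ⟨⟨fwd, bwd⟩, ?_⟩
    rintro ⟨h1, h2⟩
    obtain ⟨hb, ha'⟩ := fwd ⟨h1, h2⟩
    apply Subtype.ext
    rw [comp_fst h2, comp_fst h1, comp_fst ha', comp_fst hb]
    exact sup_assoc α.1 β.1 γ.1
  · intro α
    have hb1 : Admissible2 α ⊥ := by
      show IsNoncrossing (shuffle2 α.1 (⊥ : NCP n).1)
      exact (shuffle_nc_iff α.2 (⊥ : NCP n).2).2 (adm_bot_right α.1)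
    have hb2 : Admissible2 (⊥ : NCP n) α := by
      show IsNoncrossing (shuffle2 (⊥ : NCP n).1 α.1)
      exact (shuffle_nc_iff (⊥ : NCP n).2 α.2).2 (adm_bot_left α.1)
    refine ⟨hb1, hb2, ?_, ?_⟩
    · apply Subtype.ext
      rw [comp_fst hb1]
      show α.1 ⊔ (⊥ : NCP n).1 = α.1
      have e : (⊥ : NCP n).1 = (⊥ : Setoid (Fin n)) := rfl
      rw [e, sup_bot_eq]
    · apply Subtype.ext
      rw [comp_fst hb2]
      show (⊥ : NCP n).1 ⊔ α.1 = α.1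
      have e : (⊥ : NCP n).1 = (⊥ : Setoid (Fin n)) := rfl
      rw [e, bot_sup_eq]
end
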